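/- arXiv:1209.1873 — 4 statements merged into one kernel-verified Lean document; each statement's English description precedes it below -/
import Mathlib

section
/- One-step improvement bound (key lemma): Let γ ≥ 0 and suppose each convex conjugate φ_i* is γ-strongly convex, i.e., φ_i*(su + (1−s)v) ≤ s φ_i*(u) + (1−s) φ_i*(v) − (γ/2)s(1−s)(u−v)² whenever φ_i*(u), φ_i*(v) < ∞ and s ∈ [0,1]. Let α ∈ ℝⁿ with φ_i*(−α_i) < ∞ for all i, let w = w(α), and let u ∈ ℝⁿ satisfy −u_i ∈ ∂φ_i(x_iᵀw) for each i. Then for every s ∈ (0,1]: (1/n)∑_{i=1}^n [D(α + s(u_i − α_i)e_i) − D(α)] ≥ (s/n)(P(w) − D(α)) − (s/n)²·G/(2λ), where G = (1/n)∑_{i=1}^n (‖x_i‖² − γ(1−s)λn/s)(u_i − α_i)² and e_i is the i-th standard basis vector of ℝⁿ. -/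
open scoped BigOperators RealInnerProductSpace
open Finset

/-- The convex conjugate `φ*(u) = sup_z (z*u - φ z)` (as a real number; junk value
when the supremum is not finite). -/
noncomputable def fconj (φ : ℝ → ℝ) (u : ℝ) : ℝ := ⨆ z : ℝ, (z * u - φ z)

/-- `φ*(u) < ∞`, i.e. the defining supremum of the conjugate is finite. -/
def FiniteConj (φ : ℝ → ℝ) (u : ℝ) : Prop :=
  BddAbove (Set.range fun z => z * u - φ z)

/-- `g ∈ ∂φ(a)`: `g` is a subgradient of `φ` at `a`. -/
def IsSubgrad (φ : ℝ → ℝ) (a g : ℝ) : Prop :=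
  ∀ b, φ a + g * (b - a) ≤ φ b

/-- `u ∈ ∂φ*(b)`: `u` is a subgradient of the conjugate `φ*` at `b`
(the subgradient inequality being required at all points where `φ*` is finite). -/
def ConjSubgrad (φ : ℝ → ℝ) (b u : ℝ) : Prop :=
  FiniteConj φ b ∧ ∀ v, FiniteConj φ v → fconj φ b + u * (v - b) ≤ fconj φ v

/-- Dual feasibility: `φ_i*(-α_i) < ∞` for all `i`. -/
def Feas {n : ℕ} (φ : Fin n → ℝ → ℝ) (α : Fin n → ℝ) : Prop :=
  ∀ i, FiniteConj (φ i) (-(α i))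

/-- `w(α) = (1/(λ n)) ∑ι α_i x_i`. -/
noncomputable def wvec {n d : ℕ} (lam : ℝ) (x : Fin n → EuclideanSpace ℝ (Fin d))
    (α : Fin n → ℝ) : EuclideanSpace ℝ (Fin d) :=
  (1 / (lam * (n : ℝ))) • ∑ i, α i • x i

/-- The primal objective `P(w)`. -/
noncomputable def primalObj {n d : ℕ} (lam : ℝ) (x : Fin n → EuclideanSpace ℝ (Fin d))
    (φ : Fin n → ℝ → ℝ) (w : EuclideanSpace ℝ (Fin d)) : ℝ :=
  (1 / (n : ℝ)) * ∑ i, φ i ⟪x i, w⟫ + lam / 2 * ‖w‖ ^ 2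

/-- The dual objective `D(α)`. -/
noncomputable def dualObj {n d : ℕ} (lam : ℝ) (x : Fin n → EuclideanSpace ℝ (Fin d))
    (φ : Fin n → ℝ → ℝ) (α : Fin n → ℝ) : ℝ :=
  (1 / (n : ℝ)) * ∑ i, -(fconj (φ i) (-(α i))) - lam / 2 * ‖wvec lam x α‖ ^ 2

/-- The SDCA trajectory: `α^(0) = α0`, `α^(t+1) = step α^(t) (idx t)`. -/
noncomputable def traj {n : ℕ} (step : (Fin n → ℝ) → Fin n → (Fin n → ℝ))
    (α0 : Fin n → ℝ) (idx : ℕ → Fin n) : ℕ → (Fin n → ℝ)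
  | 0 => α0
  | t + 1 => step (traj step α0 idx t) (idx t)

/-- Expectation over the first `t` coordinates of a uniformly random i.i.d. index
sequence, applied to a function `g` of the index sequence (which should depend
only on the first `t` indices). -/
noncomputable def ExpIdx {n : ℕ} (hn : 0 < n) (t : ℕ) (g : (ℕ → Fin n) → ℝ) : ℝ :=
  (∑ idx : Fin t → Fin n,
      g (fun k => if h : k < t then idx ⟨k, h⟩ else (⟨0, hn⟩ : Fin n))) / (n : ℝ) ^ t

/-! The dual step of size `s` towards `u` interpolates `-α_i` and `-u_i`, so strong convexity of
`φ_i*` bounds the change of `-φ_i*` from below, while `-u_i ∈ ∂φ_i(x_iᵀw)` turns `φ_i*(-u_i)` into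
`-u_i x_iᵀw - φ_i(x_iᵀw)` (Fenchel–Young equality). The change of the quadratic term is exact, and
averaging over `i` recovers the duality gap `P(w) - D(α) = (1/n) ∑ (φ_i(x_iᵀw) + φ_i*(-α_i) + α_i x_iᵀw)`. -/

section Conjugate

variable {φ : ℝ → ℝ} {a g : ℝ}

theorem mul_sub_le_of_isSubgrad (h : IsSubgrad φ a g) (z : ℝ) : z * g - φ z ≤ a * g - φ a := by
  nlinarith [h z]

theorem finiteConj_of_isSubgrad (h : IsSubgrad φ a g) : FiniteConj φ g :=
  ⟨a * g - φ a, by rintro _ ⟨z, rfl⟩; exact mul_sub_le_of_isSubgrad h z⟩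

theorem fconj_eq_of_isSubgrad (h : IsSubgrad φ a g) : fconj φ g = a * g - φ a :=
  le_antisymm (ciSup_le (mul_sub_le_of_isSubgrad h))
    (le_ciSup (f := fun z => z * g - φ z) (finiteConj_of_isSubgrad h) a)

def ConjStronglyConvex (γ : ℝ) (φ : ℝ → ℝ) : Prop :=
  ∀ u v : ℝ, FiniteConj φ u → FiniteConj φ v → ∀ s ∈ Set.Icc (0 : ℝ) 1,
    fconj φ (s * u + (1 - s) * v)
      ≤ s * fconj φ u + (1 - s) * fconj φ v - γ / 2 * s * (1 - s) * (u - v) ^ 2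

end Conjugate

theorem sum_update_sub_sum {ι β M : Type*} [Fintype ι] [DecidableEq ι] [AddCommGroup M]
    (f : ι → β → M) (α : ι → β) (i : ι) (b : β) :
    ∑ j, f j (Function.update α i b j) - ∑ j, f j (α j) = f i b - f i (α i) := by
  rw [← sum_sub_distrib, sum_eq_single i (fun j _ hj => by simp [hj]) (by simp)]
  simp

section Dual

variable {n d : ℕ} (lam : ℝ) (x : Fin n → EuclideanSpace ℝ (Fin d)) (φ : Fin n → ℝ → ℝ)
  (α : Fin n → ℝ)

theorem wvec_update_add (i : Fin n) (δ : ℝ) :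
    wvec lam x (Function.update α i (α i + δ)) = wvec lam x α + (δ / (lam * n)) • x i := by
  have hsum := sum_update_sub_sum (fun j b => b • x j) α i (α i + δ)
  simp only [add_smul, add_sub_cancel_left] at hsum
  rw [wvec, wvec, ← sub_add_cancel (∑ j, _ • x j) (∑ j, α j • x j), hsum, smul_add, smul_smul,
    one_div_mul_eq_div, add_comm]

theorem dualObj_update_add_sub (i : Fin n) (δ : ℝ) :
    dualObj lam x φ (Function.update α i (α i + δ)) - dualObj lam x φ α
      = (1 / n) * (fconj (φ i) (-α i) - fconj (φ i) (-(α i + δ)))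
        - lam / 2 * (2 * (δ / (lam * n)) * ⟪x i, wvec lam x α⟫
            + (δ / (lam * n)) ^ 2 * ‖x i‖ ^ 2) := by
  have hsum := sum_update_sub_sum (fun j b => -fconj (φ j) (-b)) α i (α i + δ)
  have hnorm := norm_add_sq_real (wvec lam x α) ((δ / (lam * n)) • x i)
  rw [real_inner_smul_right, real_inner_comm, norm_smul, mul_pow, Real.norm_eq_abs, sq_abs]
    at hnorm
  simp only [dualObj, wvec_update_add, hnorm]
  linear_combination (1 / (n : ℝ)) * hsum

theorem lam_mul_norm_wvec_sq :
    lam * ‖wvec lam x α‖ ^ 2 = (1 / n) * ∑ i, α i * ⟪x i, wvec lam x α⟫ := by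
  rcases eq_or_ne lam 0 with rfl | hlam
  · simp [wvec]
  have hinner : ∑ i, α i * ⟪x i, wvec lam x α⟫ = ⟪∑ i, α i • x i, wvec lam x α⟫ := by
    simp only [sum_inner, real_inner_smul_left]
  rw [hinner, ← real_inner_self_eq_norm_sq]
  nth_rewrite 1 [wvec]
  rw [real_inner_smul_left]
  field_simp

theorem primalObj_sub_dualObj :
    primalObj lam x φ (wvec lam x α) - dualObj lam x φ α
      = (1 / n) * ∑ i, (φ i ⟪x i, wvec lam x α⟫ + fconj (φ i) (-α i)
          + α i * ⟪x i, wvec lam x α⟫) := by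
  have hquad := lam_mul_norm_wvec_sq lam x α
  simp only [primalObj, dualObj, sum_add_distrib, sum_neg_distrib]
  linear_combination hquad

end Dual

theorem dualObj_update_sub_ge {n d : ℕ} (hn : n ≠ 0) (x : Fin n → EuclideanSpace ℝ (Fin d))
    (φ : Fin n → ℝ → ℝ) {lam : ℝ} (hlam : lam ≠ 0) {γ : ℝ}
    (α u : Fin n → ℝ) (i : Fin n) (hα : FiniteConj (φ i) (-α i))
    (hu : IsSubgrad (φ i) ⟪x i, wvec lam x α⟫ (-u i))
    (hsc : ConjStronglyConvex γ (φ i)) {s : ℝ} (hs0 : 0 < s) (hs1 : s ≤ 1) :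
    (s / n) * (φ i ⟪x i, wvec lam x α⟫ + fconj (φ i) (-α i) + α i * ⟪x i, wvec lam x α⟫)
        - (s / n) ^ 2 * ((‖x i‖ ^ 2 - γ * (1 - s) * lam * n / s) * (u i - α i) ^ 2) / (2 * lam)
      ≤ dualObj lam x φ (Function.update α i (α i + s * (u i - α i))) - dualObj lam x φ α := by
  have hinterp : fconj (φ i) (-(α i + s * (u i - α i)))
      ≤ s * fconj (φ i) (-u i) + (1 - s) * fconj (φ i) (-α i)
        - γ / 2 * s * (1 - s) * (-u i - -α i) ^ 2 := by
    rw [show -(α i + s * (u i - α i)) = s * -u i + (1 - s) * -α i by ring]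
    exact hsc _ _ (finiteConj_of_isSubgrad hu) hα s ⟨hs0.le, hs1⟩
  have hn' : (n : ℝ) ≠ 0 := Nat.cast_ne_zero.mpr hn
  rw [fconj_eq_of_isSubgrad hu] at hinterp
  rw [dualObj_update_add_sub]
  refine sub_nonneg.mp ((mul_nonneg (one_div_nonneg.mpr n.cast_nonneg)
    (sub_nonneg.mpr hinterp)).trans_eq ?_)
  field_simp
  ring

theorem key_lemma_general
    (n d : ℕ) (hn : 1 ≤ n)
    (x : Fin n → EuclideanSpace ℝ (Fin d))
    (φ : Fin n → ℝ → ℝ)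
    (lam : ℝ) (hlam : 0 < lam)
    (γ : ℝ)
    (hsc : ∀ i, ∀ u v : ℝ, FiniteConj (φ i) u → FiniteConj (φ i) v →
      ∀ s ∈ Set.Icc (0 : ℝ) 1,
        fconj (φ i) (s * u + (1 - s) * v)
          ≤ s * fconj (φ i) u + (1 - s) * fconj (φ i) v - γ / 2 * s * (1 - s) * (u - v) ^ 2)
    (α : Fin n → ℝ) (hα : Feas φ α)
    (u : Fin n → ℝ)
    (hu : ∀ i, IsSubgrad (φ i) ⟪x i, wvec lam x α⟫ (-(u i)))
    (s : ℝ) (hs0 : 0 < s) (hs1 : s ≤ 1) :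
    (s / n) * (primalObj lam x φ (wvec lam x α) - dualObj lam x φ α)
        - (s / n) ^ 2 *
            ((1 / (n : ℝ)) * ∑ i, (‖x i‖ ^ 2 - γ * (1 - s) * lam * (n : ℝ) / s) * (u i - α i) ^ 2)
            / (2 * lam)
      ≤ (1 / (n : ℝ)) *
          ∑ i, (dualObj lam x φ (Function.update α i (α i + s * (u i - α i))) - dualObj lam x φ α) := by
  have hcoord i := dualObj_update_sub_ge (Nat.one_le_iff_ne_zero.mp hn) x φ hlam.ne' α u i (hα i)
    (hu i) (hsc i) hs0 hs1
  calc _ = (1 / (n : ℝ)) * ∑ i, ((s / n) * (φ i ⟪x i, wvec lam x α⟫ + fconj (φ i) (-α i)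
            + α i * ⟪x i, wvec lam x α⟫)
          - (s / n) ^ 2 * ((‖x i‖ ^ 2 - γ * (1 - s) * lam * n / s) * (u i - α i) ^ 2)
            / (2 * lam)) := by
        rw [primalObj_sub_dualObj, sum_sub_distrib, ← mul_sum, ← sum_div, ← mul_sum]
        ring
    _ ≤ _ := mul_le_mul_of_nonneg_left (sum_le_sum fun i _ => hcoord i) (by positivity)

/-- One-step improvement bound (key lemma, Lemma 1): the average coordinate-wise
dual improvement of a step of size `s` towards `u` is at least
`(s/n)(P(w)-D(α)) - (s/n)² G/(2λ)`. -/
theorem key_lemma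
    (n d : ℕ) (hn : 1 ≤ n)
    (x : Fin n → EuclideanSpace ℝ (Fin d))
    (φ : Fin n → ℝ → ℝ) (hconv : ∀ i, ConvexOn ℝ Set.univ (φ i))
    (lam : ℝ) (hlam : 0 < lam)
    (γ : ℝ) (hγ : 0 ≤ γ)
    (hsc : ∀ i, ∀ u v : ℝ, FiniteConj (φ i) u → FiniteConj (φ i) v →
      ∀ s ∈ Set.Icc (0 : ℝ) 1,
        fconj (φ i) (s * u + (1 - s) * v)
          ≤ s * fconj (φ i) u + (1 - s) * fconj (φ i) v - γ / 2 * s * (1 - s) * (u - v) ^ 2)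
    (α : Fin n → ℝ) (hα : Feas φ α)
    (u : Fin n → ℝ)
    (hu : ∀ i, IsSubgrad (φ i) ⟪x i, wvec lam x α⟫ (-(u i)))
    (s : ℝ) (hs0 : 0 < s) (hs1 : s ≤ 1) :
    (s / n) * (primalObj lam x φ (wvec lam x α) - dualObj lam x φ α)
        - (s / n) ^ 2 *
            ((1 / (n : ℝ)) * ∑ i, (‖x i‖ ^ 2 - γ * (1 - s) * lam * (n : ℝ) / s) * (u i - α i) ^ 2)
            / (2 * lam)
      ≤ (1 / (n : ℝ)) *
          ∑ i, (dualObj lam x φ (Function.update α i (α i + s * (u i - α i))) - dualObj lam x φ α) :=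
  key_lemma_general n d hn x φ lam hlam γ hsc α hα u hu s hs0 hs1
end

section
/- Recursion lemma: Let n ≥ 1 be an integer, λ, G > 0, and let (ε_t)_{t≥0} be nonnegative reals with ε_0 ≥ 0 such that for every integer t ≥ 1 and every s ∈ [0,1], ε_t ≤ (1 − s/n) ε_{t−1} + (s/n)² G/(2λ). Set t_0 = max(0, ⌈n log(2λn ε_0 / G)⌉). Then for every integer t ≥ t_0, ε_t ≤ 2G/(λ(2n + t − t_0)). -/
/-!
With `C = G/(2λ)` the recursion reads `ε_t ≤ (1 - η) ε_{t-1} + η² C` for every step size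
`η ∈ [0, 1/n]`. Taking `η = 1/n` for the first `t₀` steps contracts `ε_0` geometrically down to
the level `2C/n`; the choice of `t₀` is exactly what makes `(1 - 1/n)^{t₀} ε_0 ≤ C/n`. From then on
an induction with the step size `η = 2/(2n + k)` keeps `ε_{t₀+k} ≤ 4C/(2n + k)`.
-/

open Real

theorem le_pow_mul_add_of_le_mul_add {x : ℕ → ℝ} {q c : ℝ} (hq : 0 ≤ q) (hc : 0 ≤ c)
    (h : ∀ k, x (k + 1) ≤ q * x k + (1 - q) * c) (k : ℕ) : x k ≤ q ^ k * x 0 + c := by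
  induction k with
  | zero => simpa using hc
  | succ k ih =>
    calc x (k + 1) ≤ q * x k + (1 - q) * c := h k
      _ ≤ q * (q ^ k * x 0 + c) + (1 - q) * c := by gcongr
      _ = q ^ (k + 1) * x 0 + c := by ring

theorem one_sub_pow_mul_le_of_log_div_le {u a b : ℝ} {T : ℕ} (hu : u ≤ 1) (hb : 0 < b)
    (hT : log (a / b) ≤ T * u) : (1 - u) ^ T * a ≤ b := by
  rcases le_or_gt a 0 with ha | ha
  · exact (mul_nonpos_of_nonneg_of_nonpos (pow_nonneg (by linarith) T) ha).trans hb.le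
  have hab : a ≤ b * exp (T * u) := by
    rwa [← div_le_iff₀' hb, ← log_le_iff_le_exp (div_pos ha hb)]
  calc (1 - u) ^ T * a ≤ exp (-u) ^ T * a := by
        gcongr
        exact one_sub_le_exp_neg u
    _ = exp (-(T * u)) * a := by rw [← exp_nat_mul]; ring_nf
    _ ≤ exp (-(T * u)) * (b * exp (T * u)) := by gcongr
    _ = b := by rw [mul_left_comm, ← exp_add, neg_add_cancel, exp_zero, mul_one]

theorem one_sub_two_div_mul_add_sq_le {a C : ℝ} (ha : 0 < a) (hC : 0 ≤ C) :
    (1 - 2 / a) * (4 * C / a) + (2 / a) ^ 2 * C ≤ 4 * C / (a + 1) := by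
  have key : (1 - 2 / a) * (4 * C / a) + (2 / a) ^ 2 * C = 4 * C * (a - 1) / a ^ 2 := by
    field_simp
    ring
  rw [key, div_le_div_iff₀ (by positivity) (by linarith)]
  nlinarith

def IsSDCARecursion (x : ℕ → ℝ) (n C : ℝ) : Prop :=
  ∀ k, ∀ s ∈ Set.Icc (0 : ℝ) 1, x (k + 1) ≤ (1 - s / n) * x k + (s / n) ^ 2 * C

namespace IsSDCARecursion

variable {x : ℕ → ℝ} {n C : ℝ}

theorem shift (h : IsSDCARecursion x n C) (T : ℕ) : IsSDCARecursion (fun k ↦ x (T + k)) n C :=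
  fun k ↦ h (T + k)

theorem le_two_mul_div_of_log_le (h : IsSDCARecursion x n C) (hn : 1 ≤ n) (hC : 0 < C) {T : ℕ}
    (hT : n * log (n * x 0 / C) ≤ T) : x T ≤ 2 * C / n := by
  have hn₀ : 0 < n := by linarith
  have hstep : ∀ k, x (k + 1) ≤ (1 - 1 / n) * x k + (1 - (1 - 1 / n)) * (C / n) := by
    intro k
    convert h k 1 ⟨zero_le_one, le_rfl⟩ using 2
    ring
  have hu : 1 / n ≤ 1 := (div_le_one hn₀).2 hn
  have hburn : (1 - 1 / n) ^ T * x 0 ≤ C / n := by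
    refine one_sub_pow_mul_le_of_log_div_le hu (by positivity) ?_
    rwa [div_div_eq_mul_div, mul_comm (x 0), mul_one_div, le_div_iff₀ hn₀, mul_comm]
  calc x T ≤ (1 - 1 / n) ^ T * x 0 + C / n :=
        le_pow_mul_add_of_le_mul_add (sub_nonneg.2 hu) (by positivity) hstep T
    _ ≤ C / n + C / n := add_le_add_left hburn _
    _ = 2 * C / n := by ring

theorem le_four_mul_div (h : IsSDCARecursion x n C) (hn : 1 ≤ n) (hC : 0 ≤ C)
    (hx₀ : x 0 ≤ 2 * C / n) (k : ℕ) : x k ≤ 4 * C / (2 * n + k) := by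
  induction k with
  | zero =>
    convert hx₀ using 1
    field_simp
    ring
  | succ k ih =>
    set a : ℝ := 2 * n + k with ha_def
    have hk : (0 : ℝ) ≤ k := k.cast_nonneg
    have ha : 0 < a := by linarith
    have hs : 2 * n / a ∈ Set.Icc (0 : ℝ) 1 :=
      ⟨by positivity, (div_le_one ha).2 (by linarith)⟩
    have hsn : 2 * n / a / n = 2 / a := by field_simp
    have h2a : 0 ≤ 1 - 2 / a := sub_nonneg.2 ((div_le_one ha).2 (by linarith))
    calc x (k + 1) ≤ (1 - 2 / a) * x k + (2 / a) ^ 2 * C := by simpa only [hsn] using h k _ hs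
      _ ≤ (1 - 2 / a) * (4 * C / a) + (2 / a) ^ 2 * C := by gcongr
      _ ≤ 4 * C / (a + 1) := one_sub_two_div_mul_add_sq_le ha hC
      _ = 4 * C / (2 * n + ↑(k + 1)) := by push_cast; ring

end IsSDCARecursion

theorem sdca_recursion_lemma_general
    (n : ℕ) (hn : 1 ≤ n) (lam G : ℝ) (hlam : 0 < lam) (hG : 0 < G)
    (ε : ℕ → ℝ)
    (hrec : ∀ t : ℕ, 1 ≤ t → ∀ s : ℝ, s ∈ Set.Icc (0 : ℝ) 1 →
      ε t ≤ (1 - s / n) * ε (t - 1) + (s / n) ^ 2 * G / (2 * lam))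
    (t₀ : ℤ) (ht₀ : t₀ = max 0 ⌈(n : ℝ) * Real.log (2 * lam * n * ε 0 / G)⌉)
    (t : ℕ) (ht : (t₀ : ℝ) ≤ t) :
    ε t ≤ 2 * G / (lam * (2 * n + t - t₀)) := by
  have hn' : (1 : ℝ) ≤ n := by exact_mod_cast hn
  have hsdca : IsSDCARecursion ε n (G / (2 * lam)) := fun k s hs ↦ by
    simpa only [mul_div_assoc, Nat.add_sub_cancel] using hrec (k + 1) k.succ_pos s hs
  obtain ⟨T, rfl⟩ : ∃ T : ℕ, t₀ = T := Int.eq_ofNat_of_zero_le (ht₀ ▸ le_max_left _ _)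
  have hT : (n : ℝ) * log (n * ε 0 / (G / (2 * lam))) ≤ T := by
    rw [div_div_eq_mul_div, mul_comm _ (2 * lam), ← mul_assoc]
    exact_mod_cast (Int.le_ceil _).trans (Int.cast_le.2 (ht₀ ▸ le_max_right _ _))
  obtain ⟨k, rfl⟩ : ∃ k, t = T + k := Nat.exists_eq_add_of_le (by exact_mod_cast ht)
  have hk := (hsdca.shift T).le_four_mul_div hn' (by positivity)
    (hsdca.le_two_mul_div_of_log_le hn' (by positivity) hT) k
  have hden : (2 * n + ↑(T + k) - ((T : ℤ) : ℝ)) = 2 * n + k := by push_cast; ring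
  rw [hden]
  convert hk using 1
  field_simp
  ring

/-- Recursion lemma used in the proof of Theorem 1: a sequence satisfying the
SDCA recursion `ε_t ≤ (1 - s/n) ε_{t-1} + (s/n)² G/(2λ)` for all `s ∈ [0,1]`
decays like `2G/(λ(2n + t - t₀))` after `t₀ = max(0, ⌈n log(2λn ε₀/G)⌉)` steps. -/
theorem sdca_recursion_lemma
    (n : ℕ) (hn : 1 ≤ n) (lam G : ℝ) (hlam : 0 < lam) (hG : 0 < G)
    (ε : ℕ → ℝ) (hεpos : ∀ t, 0 ≤ ε t)
    (hrec : ∀ t : ℕ, 1 ≤ t → ∀ s : ℝ, s ∈ Set.Icc (0 : ℝ) 1 →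
      ε t ≤ (1 - s / n) * ε (t - 1) + (s / n) ^ 2 * G / (2 * lam))
    (t₀ : ℤ) (ht₀ : t₀ = max 0 ⌈(n : ℝ) * Real.log (2 * lam * n * ε 0 / G)⌉)
    (t : ℕ) (ht : (t₀ : ℝ) ≤ t) :
    ε t ≤ 2 * G / (lam * (2 * n + t - t₀)) :=
  sdca_recursion_lemma_general n hn lam G hlam hG ε hrec t₀ ht₀ t ht
end

section
/- SDCA convergence for Lipschitz losses (Theorem 1): Assume each φ_i is L-Lipschitz, together with the standing assumptions, and run the SDCA process with α^(0) = 0. Let ε_P > 0, and let T_0, T be integers with T_0 ≥ max(0, ⌈n log(λn/(2L²))⌉) + 16L²/(λ ε_P) and T − T_0 ≥ n + 4L²/(λ ε_P). Let ᾱ = (1/(T−T_0))∑_{t=T_0+1}^{T} α^(t−1) and w̄ = w(ᾱ) (or, alternatively, ᾱ = α^(t), w̄ = w^(t) for t drawn uniformly from {T_0+1,…,T}, with the expectation also over this t). Then E[P(w̄) − D(ᾱ)] ≤ ε_P. Moreover, for every t ≥ T_0, E[D(α*) − D(α^(t))] ≤ ε_P/2. -/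
open scoped BigOperators RealInnerProductSpace
open Finset

/-!
Compare an SDCA step at coordinate `i` with moving `αᵢ` a fraction `s` of the way towards `-g`,
where `g` is a subgradient of `φᵢ` at `xᵢᵀw`: convexity of `φᵢ*` together with the Fenchel–Young
equality at `g` shows that, averaged over `i`, the dual increases by at least
`(s/n)·(P(w) - D(α)) - (s/n)²·2L²/λ`; the Lipschitz bound enters by confining the dual feasible
coordinates to `[-L, L]`. As the duality gap dominates the dual suboptimality `ε_D`, in expectation
`ε_D(t+1) ≤ (1 - s/n)·ε_D(t) + (s/n)²·2L²/λ`. With `s = 1` the suboptimality reaches `2L²/(λn)`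
after `n log(λn/(2L²))` steps, and with `s = 2n/(2n + t - t₀)` it is at most
`4·(2L²/λ)/(2n + t - t₀)` afterwards. For the averaged iterate, sum the dual increase with
`s = n/(T - T₀)` over `T₀ ≤ t < T` (it telescopes) and use convexity of the duality gap in `α`.
-/

section Conjugate

variable {φ : ℝ → ℝ}

lemma fconj_le_of_forall {u c : ℝ} (h : ∀ z, z * u - φ z ≤ c) : fconj φ u ≤ c :=
  ciSup_le h

lemma le_fconj {u : ℝ} (h : FiniteConj φ u) (z : ℝ) : z * u - φ z ≤ fconj φ u :=
  le_ciSup h z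

lemma finiteConj_of_forall_le {u c : ℝ} (h : ∀ z, z * u - φ z ≤ c) : FiniteConj φ u :=
  ⟨c, Set.forall_mem_range.2 h⟩

lemma convexOn_fconj : ConvexOn ℝ {u | FiniteConj φ u} (fconj φ) := by
  have key : ∀ ⦃u v a b : ℝ⦄, FiniteConj φ u → FiniteConj φ v → 0 ≤ a → 0 ≤ b → a + b = 1 →
      ∀ z, z * (a * u + b * v) - φ z ≤ a * fconj φ u + b * fconj φ v := by
    intro u v a b hu hv ha hb hab z
    have h := add_le_add (mul_le_mul_of_nonneg_left (le_fconj hu z) ha)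
      (mul_le_mul_of_nonneg_left (le_fconj hv z) hb)
    linear_combination h + φ z * hab
  refine ⟨fun u hu v hv a b ha hb hab => ?_, fun u hu v hv a b ha hb hab => ?_⟩
  · exact finiteConj_of_forall_le (key hu hv ha hb hab)
  · exact fconj_le_of_forall (key hu hv ha hb hab)

lemma IsSubgrad.fconj_le {a g : ℝ} (hg : IsSubgrad φ a g) (z : ℝ) :
    z * g - φ z ≤ a * g - φ a := by
  linarith [hg z]

lemma IsSubgrad.finiteConj {a g : ℝ} (hg : IsSubgrad φ a g) : FiniteConj φ g :=
  finiteConj_of_forall_le hg.fconj_le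

lemma IsSubgrad.fconj_eq {a g : ℝ} (hg : IsSubgrad φ a g) : fconj φ g = a * g - φ a :=
  (fconj_le_of_forall hg.fconj_le).antisymm (le_fconj hg.finiteConj a)

lemma ConvexOn.isSubgrad_leftDeriv (hφ : ConvexOn ℝ Set.univ φ) (a : ℝ) :
    IsSubgrad φ a (derivWithin φ (Set.Iio a) a) := by
  intro b
  rcases lt_trichotomy b a with hba | rfl | hab
  · have h := hφ.slope_le_leftDeriv_of_mem_interior (Set.mem_univ b) (by simp) hba
    rw [slope_def_field, div_le_iff₀ (sub_pos.2 hba)] at h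
    linarith
  · simp
  · have h := (hφ.leftDeriv_le_rightDeriv_of_mem_interior (by simp)).trans
      (hφ.rightDeriv_le_slope_of_mem_interior (by simp) (Set.mem_univ b) hab)
    rw [slope_def_field, le_div_iff₀ (sub_pos.2 hab)] at h
    linarith

lemma abs_le_of_finiteConj {L u : ℝ} (hL : ∀ a b, |φ a - φ b| ≤ L * |a - b|)
    (h : FiniteConj φ u) : |u| ≤ L := by
  by_contra! hLu
  obtain ⟨c, hc⟩ := h
  set M := (|c + φ 0| + 1) / (|u| - L)
  have hM : 0 < M := by positivity
  obtain ⟨z, hzu, hz⟩ : ∃ z, z * u = M * |u| ∧ |z| = M := by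
    rcases le_or_gt 0 u with hu | hu
    · exact ⟨M, by rw [abs_of_nonneg hu], abs_of_pos hM⟩
    · exact ⟨-M, by rw [abs_of_neg hu]; ring, by rw [abs_neg, abs_of_pos hM]⟩
  have hφz : φ z - φ 0 ≤ L * M := by simpa [hz] using (le_abs_self _).trans (hL z 0)
  have hMδ : M * (|u| - L) = |c + φ 0| + 1 := div_mul_cancel₀ _ (sub_pos.2 hLu).ne'
  linarith [hc ⟨z, rfl⟩, le_abs_self (c + φ 0)]

end Conjugate

lemma convexOn_sum {E ι : Type*} [AddCommGroup E] [Module ℝ E] {s : Set E} (hs : Convex ℝ s)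
    (t : Finset ι) {f : ι → E → ℝ} (hf : ∀ i ∈ t, ConvexOn ℝ s (f i)) :
    ConvexOn ℝ s fun v => ∑ i ∈ t, f i v := by
  refine ⟨hs, fun u hu v hv a b ha hb hab => ?_⟩
  simp only [smul_eq_mul, Finset.mul_sum, ← Finset.sum_add_distrib]
  exact Finset.sum_le_sum fun i hi => (hf i hi).2 hu hv ha hb hab

lemma sum_update_apply {ι : Type*} [Fintype ι] [DecidableEq ι] (f : ι → ℝ → ℝ) (α : ι → ℝ)
    (i : ι) (c : ℝ) :
    ∑ j, f j (Function.update α i c j) = ∑ j, f j (α j) + (f i c - f i (α i)) := by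
  rw [← sub_eq_iff_eq_add', ← Finset.sum_sub_distrib,
    Fintype.sum_eq_single i fun j hj => by simp [Function.update_of_ne hj]]
  simp

section Objectives

variable {n d : ℕ} (lam : ℝ) (x : Fin n → EuclideanSpace ℝ (Fin d)) (φ : Fin n → ℝ → ℝ)

noncomputable def wvecₗ : (Fin n → ℝ) →ₗ[ℝ] EuclideanSpace ℝ (Fin d) :=
  (1 / (lam * n)) • Fintype.linearCombination ℝ x

lemma wvecₗ_apply (α : Fin n → ℝ) : wvecₗ lam x α = wvec lam x α := by
  simp [wvecₗ, wvec, Fintype.linearCombination_apply]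

noncomputable def dualityGap (α : Fin n → ℝ) : ℝ :=
  primalObj lam x φ (wvec lam x α) - dualObj lam x φ α

variable {lam}

lemma mul_real_inner_wvec (hlam : lam ≠ 0) (β : Fin n → ℝ) (v : EuclideanSpace ℝ (Fin d)) :
    lam * ⟪wvec lam x β, v⟫ = 1 / n * ∑ i, β i * ⟪x i, v⟫ := by
  simp only [wvec, real_inner_smul_left, sum_inner, ← mul_assoc]
  rw [mul_one_div, div_mul_cancel_left₀ hlam, inv_eq_one_div]

lemma wvec_update (α : Fin n → ℝ) (i : Fin n) (c : ℝ) :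
    wvec lam x (Function.update α i c) = wvec lam x α + ((c - α i) / (lam * n)) • x i := by
  simp only [← wvecₗ_apply, Pi.update_eq_sub_add_single, map_add, map_sub]
  simp only [wvecₗ, LinearMap.smul_apply, Fintype.linearCombination_apply_single]
  module

lemma dualObj_le_primalObj (hlam : 0 < lam) {β : Fin n → ℝ} (hβ : Feas φ β)
    (w : EuclideanSpace ℝ (Fin d)) : dualObj lam x φ β ≤ primalObj lam x φ w := by
  have fenchelYoung : ∑ i, -fconj (φ i) (-β i) ≤ ∑ i, (φ i ⟪x i, w⟫ + β i * ⟪x i, w⟫) :=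
    Finset.sum_le_sum fun i _ => by linarith [le_fconj (hβ i) ⟪x i, w⟫]
  have hinner := mul_real_inner_wvec x hlam.ne' β w
  have hsq : 0 ≤ lam / 2 * ‖w - wvec lam x β‖ ^ 2 := by positivity
  rw [norm_sub_sq_real, real_inner_comm] at hsq
  rw [Finset.sum_add_distrib] at fenchelYoung
  have := mul_le_mul_of_nonneg_left fenchelYoung (by positivity : (0 : ℝ) ≤ 1 / n)
  simp only [dualObj, primalObj]
  nlinarith

lemma dualityGap_eq_sum (hlam : lam ≠ 0) (α : Fin n → ℝ) :
    dualityGap lam x φ α = 1 / n * ∑ i,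
      (φ i ⟪x i, wvec lam x α⟫ + fconj (φ i) (-α i) + α i * ⟪x i, wvec lam x α⟫) := by
  have h := mul_real_inner_wvec x hlam α (wvec lam x α)
  rw [real_inner_self_eq_norm_sq] at h
  simp only [dualityGap, primalObj, dualObj, Finset.sum_add_distrib, Finset.sum_neg_distrib]
  linear_combination h

end Objectives

section Convexity

variable {n d : ℕ} {lam : ℝ} (x : Fin n → EuclideanSpace ℝ (Fin d)) {φ : Fin n → ℝ → ℝ}

lemma convex_setOf_feas : Convex ℝ {α : Fin n → ℝ | Feas φ α} := by
  intro α hα β hβ a b ha hb hab i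
  have h := convexOn_fconj.1 (hα i) (hβ i) ha hb hab
  simp only [Pi.add_apply, Pi.smul_apply, smul_eq_mul, neg_add, ← mul_neg]
  exact h

lemma convexOn_dualityGap (hconv : ∀ i, ConvexOn ℝ Set.univ (φ i)) (hlam : 0 ≤ lam) :
    ConvexOn ℝ {α | Feas φ α} (dualityGap lam x φ) := by
  have hS := convex_setOf_feas (φ := φ)
  have loss : ConvexOn ℝ {α | Feas φ α} fun α => ∑ i, φ i ⟪x i, wvec lam x α⟫ :=
    convexOn_sum hS _ fun i _ =>
      (((hconv i).comp_linearMap ((innerₛₗ ℝ (x i)) ∘ₗ wvecₗ lam x)).subset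
        (Set.subset_univ _) hS).congr fun α _ => by simp [wvecₗ_apply]
  have conj : ConvexOn ℝ {α | Feas φ α} fun α => ∑ i, fconj (φ i) (-α i) :=
    convexOn_sum hS _ fun i _ =>
      (convexOn_fconj.comp_linearMap (-LinearMap.proj (R := ℝ) (φ := fun _ : Fin n => ℝ) i)).subset
        (fun α (hα : Feas φ α) => hα i) hS
  have sq : ConvexOn ℝ {α | Feas φ α} fun α => ‖wvec lam x α‖ ^ 2 :=
    (((convexOn_univ_norm.pow (fun _ _ => norm_nonneg _) 2).comp_linearMap
      (wvecₗ lam x)).subset (Set.subset_univ _) hS).congr fun α _ => by simp [wvecₗ_apply]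
  refine (((loss.smul (by positivity : (0 : ℝ) ≤ 1 / n)).add
    (conj.smul (by positivity : (0 : ℝ) ≤ 1 / n))).add (sq.smul hlam)).congr fun α _ => ?_
  simp only [dualityGap, primalObj, dualObj, Finset.sum_neg_distrib, Pi.add_apply, smul_eq_mul]
  ring

lemma dualityGap_smul_sum_le (hconv : ∀ i, ConvexOn ℝ Set.univ (φ i)) (hlam : 0 ≤ lam)
    {T₀ T : ℕ} (hTT : T₀ < T) (β : ℕ → Fin n → ℝ) (hβ : ∀ t, Feas φ (β t)) :
    dualityGap lam x φ ((1 / ((T : ℝ) - T₀)) • ∑ t ∈ Finset.Ico T₀ T, β t)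
      ≤ 1 / ((T : ℝ) - T₀) * ∑ t ∈ Finset.Ico T₀ T, dualityGap lam x φ (β t) := by
  have hm : (0 : ℝ) < T - T₀ := sub_pos.2 (Nat.cast_lt.2 hTT)
  rw [Finset.smul_sum, Finset.mul_sum]
  refine (convexOn_dualityGap x hconv hlam).map_sum_le (fun _ _ => by positivity) ?_
    fun t _ => hβ t
  rw [Finset.sum_const, Nat.card_Ico, nsmul_eq_mul, Nat.cast_sub hTT.le]
  exact mul_one_div_cancel hm.ne'

end Convexity

section CoordinateAscent

variable {n d : ℕ} {lam : ℝ} (x : Fin n → EuclideanSpace ℝ (Fin d)) (φ : Fin n → ℝ → ℝ)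

lemma dualObj_update (hlam : lam ≠ 0) (α : Fin n → ℝ) (i : Fin n) (c : ℝ) :
    dualObj lam x φ (Function.update α i c) = dualObj lam x φ α
      + (fconj (φ i) (-α i) - fconj (φ i) (-c)) / n
      - (c - α i) * ⟪x i, wvec lam x α⟫ / n
      - (c - α i) ^ 2 * ‖x i‖ ^ 2 / (2 * lam * n ^ 2) := by
  have hsum := sum_update_apply (fun j u => -fconj (φ j) (-u)) α i c
  rw [dualObj, dualObj, hsum, wvec_update, norm_add_sq_real, real_inner_smul_right, norm_smul,
    Real.norm_eq_abs, mul_pow, sq_abs, real_inner_comm]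
  have hn : (n : ℝ) ≠ 0 := Nat.cast_ne_zero.2 i.pos.ne'
  field_simp
  ring

lemma le_dualObj_step_sub (hlam : 0 < lam) (hconv : ∀ i, ConvexOn ℝ Set.univ (φ i)) {L : ℝ}
    (hL : ∀ i, ∀ a b : ℝ, |φ i a - φ i b| ≤ L * |a - b|) (hx : ∀ i, ‖x i‖ ≤ 1)
    (step : (Fin n → ℝ) → Fin n → (Fin n → ℝ))
    (hstep_max : ∀ α i c, Feas φ (Function.update α i c) →
      dualObj lam x φ (Function.update α i c) ≤ dualObj lam x φ (step α i))
    {α : Fin n → ℝ} (hα : Feas φ α) {s : ℝ} (hs0 : 0 ≤ s) (hs1 : s ≤ 1) (i : Fin n) :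
    s / n * (φ i ⟪x i, wvec lam x α⟫ + fconj (φ i) (-α i) + α i * ⟪x i, wvec lam x α⟫)
        - (s / n) ^ 2 * (2 * L ^ 2 / lam)
      ≤ dualObj lam x φ (step α i) - dualObj lam x φ α := by
  set a := ⟪x i, wvec lam x α⟫
  set g := derivWithin (φ i) (Set.Iio a) a
  have hg : IsSubgrad (φ i) a g := (hconv i).isSubgrad_leftDeriv a
  -- move the `i`-th coordinate a fraction `s` of the way towards `-g`, where `g ∈ ∂φᵢ(a)`
  set c := (1 - s) * α i + s * -g
  have hc : -c = (1 - s) * -α i + s * g := by ring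
  have hfin : FiniteConj (φ i) (-c) :=
    hc ▸ convexOn_fconj.1 (hα i) hg.finiteConj (by linarith) hs0 (by ring)
  have hconj : fconj (φ i) (-c) ≤ (1 - s) * fconj (φ i) (-α i) + s * (a * g - φ i a) := by
    rw [hc, ← hg.fconj_eq]
    exact convexOn_fconj.2 (hα i) hg.finiteConj (by linarith) hs0 (by ring)
  have hfeas : Feas φ (Function.update α i c) := by
    intro j
    rcases eq_or_ne j i with rfl | hj
    · simpa using hfin
    · simpa [hj] using hα j
  have hmax := hstep_max α i c hfeas
  rw [dualObj_update x φ hlam.ne', show c - α i = -(s * (g + α i)) by ring] at hmax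
  have hαL : |α i| ≤ L := by simpa using abs_le_of_finiteConj (hL i) (hα i)
  have hgL : |g| ≤ L := abs_le_of_finiteConj (hL i) hg.finiteConj
  have hquad : (-(s * (g + α i))) ^ 2 * ‖x i‖ ^ 2 ≤ s ^ 2 * (4 * L ^ 2) := by
    have : (g + α i) ^ 2 ≤ 4 * L ^ 2 := by
      rw [← sq_abs]; nlinarith [abs_add_le g (α i), abs_nonneg (g + α i)]
    have : ‖x i‖ ^ 2 ≤ 1 := pow_le_one₀ (norm_nonneg _) (hx i)
    rw [neg_sq, mul_pow]
    calc s ^ 2 * (g + α i) ^ 2 * ‖x i‖ ^ 2 ≤ s ^ 2 * (g + α i) ^ 2 * 1 := by gcongr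
      _ ≤ s ^ 2 * (4 * L ^ 2) := by rw [mul_one]; gcongr
  have hN : (0 : ℝ) < n := Nat.cast_pos.2 i.pos
  have hA := div_le_div_of_nonneg_right hconj hN.le
  have hQ : (-(s * (g + α i))) ^ 2 * ‖x i‖ ^ 2 / (2 * lam * n ^ 2)
      ≤ (s / n) ^ 2 * (2 * L ^ 2 / lam) := by
    calc _ ≤ s ^ 2 * (4 * L ^ 2) / (2 * lam * n ^ 2) := by gcongr
      _ = _ := by field_simp; ring
  linear_combination hmax + hA + hQ

lemma le_avg_dualObj_step_sub (hn : 0 < n) (hlam : 0 < lam)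
    (hconv : ∀ i, ConvexOn ℝ Set.univ (φ i)) {L : ℝ}
    (hL : ∀ i, ∀ a b : ℝ, |φ i a - φ i b| ≤ L * |a - b|) (hx : ∀ i, ‖x i‖ ≤ 1)
    (step : (Fin n → ℝ) → Fin n → (Fin n → ℝ))
    (hstep_max : ∀ α i c, Feas φ (Function.update α i c) →
      dualObj lam x φ (Function.update α i c) ≤ dualObj lam x φ (step α i))
    {α : Fin n → ℝ} (hα : Feas φ α) {s : ℝ} (hs0 : 0 ≤ s) (hs1 : s ≤ 1) :
    s / n * dualityGap lam x φ α - (s / n) ^ 2 * (2 * L ^ 2 / lam)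
      ≤ (∑ j, dualObj lam x φ (step α j)) / n - dualObj lam x φ α := by
  have h := Finset.sum_le_sum fun i (_ : i ∈ univ) =>
    le_dualObj_step_sub x φ hlam hconv hL hx step hstep_max hα hs0 hs1 i
  simp only [Finset.sum_sub_distrib, ← Finset.mul_sum, sum_const, card_univ, Fintype.card_fin,
    nsmul_eq_mul] at h
  have hN : (0 : ℝ) < n := Nat.cast_pos.2 hn
  rw [dualityGap_eq_sum x φ hlam.ne']
  calc _ = (s / n * ∑ i, (φ i ⟪x i, wvec lam x α⟫ + fconj (φ i) (-α i)
          + α i * ⟪x i, wvec lam x α⟫) - (s / n) ^ 2 * (n * (2 * L ^ 2 / lam))) / n := by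
        field_simp
    _ ≤ ((∑ j, dualObj lam x φ (step α j)) - n * dualObj lam x φ α) / n :=
        div_le_div_of_nonneg_right h hN.le
    _ = _ := by field_simp

end CoordinateAscent

section Expectation

variable {n : ℕ} (hn : 0 < n)

lemma expIdx_mono {t : ℕ} {g h : (ℕ → Fin n) → ℝ} (hgh : ∀ idx, g idx ≤ h idx) :
    ExpIdx hn t g ≤ ExpIdx hn t h :=
  div_le_div_of_nonneg_right (Finset.sum_le_sum fun _ _ => hgh _) (by positivity)

lemma expIdx_const (t : ℕ) (c : ℝ) : ExpIdx hn t (fun _ => c) = c := by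
  have : (n : ℝ) ^ t ≠ 0 := by positivity
  simp [ExpIdx, this]

lemma expIdx_sub (t : ℕ) (g h : (ℕ → Fin n) → ℝ) :
    ExpIdx hn t (fun idx => g idx - h idx) = ExpIdx hn t g - ExpIdx hn t h := by
  simp only [ExpIdx, Finset.sum_sub_distrib, sub_div]

lemma expIdx_const_mul (t : ℕ) (c : ℝ) (g : (ℕ → Fin n) → ℝ) :
    ExpIdx hn t (fun idx => c * g idx) = c * ExpIdx hn t g := by
  simp only [ExpIdx, ← Finset.mul_sum, mul_div_assoc]

lemma expIdx_sum (t : ℕ) {ι : Type*} (s : Finset ι) (g : ι → (ℕ → Fin n) → ℝ) :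
    ExpIdx hn t (fun idx => ∑ k ∈ s, g k idx) = ∑ k ∈ s, ExpIdx hn t (g k) := by
  simp only [ExpIdx, Finset.sum_div]
  exact Finset.sum_comm

lemma extend_snoc (t : ℕ) (p : Fin t → Fin n) (j : Fin n) :
    (fun k => if h : k < t + 1 then (Fin.snoc p j : Fin (t + 1) → Fin n) ⟨k, h⟩ else ⟨0, hn⟩)
      = Function.update (fun k => if h : k < t then p ⟨k, h⟩ else ⟨0, hn⟩) t j := by
  ext k
  rcases lt_trichotomy k t with hk | rfl | hk
  · simp [Fin.snoc, hk, hk.ne, Nat.lt_succ_of_lt hk]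
  · simp [Fin.snoc]
  · simp [hk.ne', hk.not_gt, (Nat.succ_le_of_lt hk).not_gt]

lemma expIdx_succ (t : ℕ) (G : (ℕ → Fin n) → ℝ) :
    ExpIdx hn (t + 1) G
      = ExpIdx hn t (fun idx => (∑ j, G (Function.update idx t j)) / n) := by
  simp only [ExpIdx]
  rw [← (Fin.snocEquiv fun _ => Fin n).sum_comp, Fintype.sum_prod_type, Finset.sum_comm,
    ← Finset.sum_div, div_div, pow_succ, mul_comm ((n : ℝ) ^ t)]
  simp only [Fin.snocEquiv, Equiv.coe_fn_mk, extend_snoc hn]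

end Expectation

section Trajectory

variable {n : ℕ} (step : (Fin n → ℝ) → Fin n → (Fin n → ℝ)) (α0 : Fin n → ℝ)

lemma traj_update_of_le {idx : ℕ → Fin n} {t : ℕ} (j : Fin n) :
    ∀ {u}, u ≤ t → traj step α0 (Function.update idx t j) u = traj step α0 idx u
  | 0, _ => rfl
  | u + 1, hu => by
    simp only [traj, traj_update_of_le j (Nat.le_of_succ_le hu),
      Function.update_of_ne (Nat.succ_le_iff.1 hu).ne]

lemma feas_traj {φ : Fin n → ℝ → ℝ} (hstep_feas : ∀ α i, Feas φ α → Feas φ (step α i))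
    (h0 : Feas φ α0) (idx : ℕ → Fin n) : ∀ t, Feas φ (traj step α0 idx t)
  | 0 => h0
  | t + 1 => hstep_feas _ _ (feas_traj hstep_feas h0 idx t)

variable (hn : 0 < n)

lemma expIdx_traj_succ (t : ℕ) (f : (Fin n → ℝ) → ℝ) :
    ExpIdx hn (t + 1) (fun idx => f (traj step α0 idx (t + 1)))
      = ExpIdx hn t (fun idx => (∑ j, f (step (traj step α0 idx t) j)) / n) := by
  rw [expIdx_succ]
  simp only [traj, traj_update_of_le step α0 _ le_rfl, Function.update_self]

lemma expIdx_traj_of_le (f : (Fin n → ℝ) → ℝ) {t T : ℕ} (h : t ≤ T) :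
    ExpIdx hn T (fun idx => f (traj step α0 idx t))
      = ExpIdx hn t (fun idx => f (traj step α0 idx t)) := by
  induction T, h using Nat.le_induction with
  | base => rfl
  | succ T hT ih =>
    have hN : (n : ℝ) ≠ 0 := by positivity
    simp only [expIdx_succ, traj_update_of_le step α0 _ hT, sum_const, card_univ,
      Fintype.card_fin, nsmul_eq_mul, mul_div_cancel_left₀ _ hN, ih]

end Trajectory

section Recurrences

lemma le_pow_mul_add_of_le {q c : ℝ} (hq : 0 ≤ q) {e : ℕ → ℝ}
    (h : ∀ t, e (t + 1) ≤ q * e t + (1 - q) * c) (t : ℕ) : e t ≤ q ^ t * (e 0 - c) + c := by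
  induction t with
  | zero => simp
  | succ t ih =>
    calc e (t + 1) ≤ q * (q ^ t * (e 0 - c) + c) + (1 - q) * c := by
          linarith [h t, mul_le_mul_of_nonneg_left ih hq]
      _ = q ^ (t + 1) * (e 0 - c) + c := by ring

lemma le_div_of_recurrence {n : ℕ} (hn : 0 < n) {K : ℝ} (hK : 0 ≤ K) {e : ℕ → ℝ}
    (hrec : ∀ t s, 0 < s → s ≤ 1 → e (t + 1) ≤ (1 - s / n) * e t + (s / n) ^ 2 * K)
    {t₀ : ℕ} (h₀ : e t₀ ≤ 2 * K / n) (k : ℕ) : e (t₀ + k) ≤ 4 * K / (2 * n + k) := by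
  have hN : (1 : ℝ) ≤ n := Nat.one_le_cast.2 hn
  induction k with
  | zero => calc e (t₀ + 0) ≤ 2 * K / n := h₀
      _ = 4 * K / (2 * n + (0 : ℕ)) := by field_simp; ring
  | succ k ih =>
    set m : ℝ := 2 * n + k
    have hm : 2 * n ≤ m := by simp [m]
    have hrec' := hrec (t₀ + k) (2 * n / m) (by positivity) ((div_le_one (by positivity)).2 hm)
    have hsn : 2 * n / m / n = 2 / m := by field_simp
    rw [hsn] at hrec'
    have hcoef : 0 ≤ 1 - 2 / m := by
      rw [sub_nonneg, div_le_one (by positivity)]; linarith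
    have hm0 : 0 < m := by linarith
    rw [← add_assoc]
    calc e (t₀ + k + 1) ≤ (1 - 2 / m) * (4 * K / m) + (2 / m) ^ 2 * K := by
          linarith [mul_le_mul_of_nonneg_left ih hcoef]
      _ = 4 * K * (m - 1) / m ^ 2 := by field_simp; ring
      _ ≤ 4 * K / (m + 1) := by
          rw [div_le_div_iff₀ (by positivity) (by positivity)]; nlinarith
      _ = 4 * K / (2 * n + (k + 1 : ℕ)) := by push_cast [m]; ring

lemma one_sub_inv_pow_le {n : ℕ} (hn : 0 < n) {c : ℝ} (hc : 0 < c) {t : ℕ}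
    (ht : n * Real.log c ≤ t) : (1 - 1 / n) ^ t ≤ c⁻¹ := by
  have hN : (0 : ℝ) < n := Nat.cast_pos.2 hn
  calc (1 - 1 / n) ^ t ≤ Real.exp (-(1 / n)) ^ t := by
        gcongr
        · rw [sub_nonneg, div_le_one hN]; exact Nat.one_le_cast.2 hn
        · linarith [Real.add_one_le_exp (-(1 / n))]
    _ = Real.exp (-(t / n)) := by rw [← Real.exp_nat_mul]; ring_nf
    _ ≤ Real.exp (-Real.log c) := by
        gcongr
        rwa [le_div_iff₀ hN, mul_comm]
    _ = c⁻¹ := by rw [Real.exp_neg, Real.exp_log hc]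

lemma le_half_of_sdca_recurrence {n : ℕ} (hn : 0 < n) {K ε : ℝ} (hK : 0 < K) (hε : 0 < ε)
    {e : ℕ → ℝ} (hrec : ∀ t s, 0 < s → s ≤ 1 → e (t + 1) ≤ (1 - s / n) * e t + (s / n) ^ 2 * K)
    (h0 : e 0 ≤ 1) {t₀ t : ℕ} (ht₀ : n * Real.log (n / K) ≤ t₀) (ht : t₀ + 8 * K / ε ≤ t) :
    e t ≤ ε / 2 := by
  have hN : (0 : ℝ) < n := Nat.cast_pos.2 hn
  have hq : 0 ≤ 1 - 1 / (n : ℝ) := by rw [sub_nonneg, div_le_one hN]; exact Nat.one_le_cast.2 hn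
  -- phase one: with `s = 1` the suboptimality decays geometrically down to order `K / n`
  have phase1 := le_pow_mul_add_of_le hq (c := K / n)
    (fun t => (hrec t 1 one_pos le_rfl).trans_eq (by ring)) t₀
  have hgeom := one_sub_inv_pow_le hn (by positivity) ht₀
  rw [inv_div] at hgeom
  have hbase : e t₀ ≤ 2 * K / n :=
    calc e t₀ ≤ (1 - 1 / (n : ℝ)) ^ t₀ * (e 0 - K / n) + K / n := phase1
      _ ≤ (1 - 1 / (n : ℝ)) ^ t₀ * 1 + K / n := by
          gcongr; linarith [div_pos hK hN]
      _ ≤ 2 * K / n := by rw [mul_div_assoc]; linarith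
  have hεK : 0 < 8 * K / ε := by positivity
  have htt₀ : t₀ ≤ t := by exact_mod_cast (by linarith : (t₀ : ℝ) ≤ t)
  have phase2 := le_div_of_recurrence hn hK.le hrec hbase (t - t₀)
  rw [Nat.add_sub_cancel' htt₀, Nat.cast_sub htt₀] at phase2
  calc e t ≤ 4 * K / (2 * n + (t - t₀ : ℝ)) := phase2
    _ ≤ 4 * K / (8 * K / ε) := by gcongr; linarith
    _ = ε / 2 := by field_simp; ring

lemma mul_sum_le_of_increment_le {G E : ℕ → ℝ} {θ K ε : ℝ} {T₀ T : ℕ} (hT : T₀ ≤ T)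
    (hθ : θ * ((T : ℝ) - T₀) = 1) (hinc : ∀ t, θ * G t - θ ^ 2 * K ≤ E (t + 1) - E t)
    (hE : E T - E T₀ ≤ ε / 2) (hθK : θ * K ≤ ε / 2) :
    θ * ∑ t ∈ Finset.Ico T₀ T, G t ≤ ε := by
  have h := Finset.sum_le_sum fun t (_ : t ∈ Finset.Ico T₀ T) => hinc t
  rw [Finset.sum_Ico_sub E hT, Finset.sum_sub_distrib, ← Finset.mul_sum, Finset.sum_const,
    Nat.card_Ico, nsmul_eq_mul, Nat.cast_sub hT] at h
  have : ((T : ℝ) - T₀) * (θ ^ 2 * K) = θ * K := by linear_combination θ * K * hθ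
  linarith

lemma one_div_mul_sum_le_of_gain {n : ℕ} (hn : 0 < n) {G E : ℕ → ℝ} {K ε : ℝ} (hK : 0 ≤ K)
    (hε : 0 < ε) {T₀ T : ℕ}
    (hgain : ∀ t s, 0 < s → s ≤ 1 → s / n * G t - (s / n) ^ 2 * K ≤ E (t + 1) - E t)
    (hE : E T - E T₀ ≤ ε / 2) (hT : n + 2 * K / ε ≤ (T : ℝ) - T₀) :
    1 / ((T : ℝ) - T₀) * ∑ t ∈ Finset.Ico T₀ T, G t ≤ ε := by
  have hN : (1 : ℝ) ≤ n := Nat.one_le_cast.2 hn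
  have hKε : 0 ≤ 2 * K / ε := by positivity
  have hm : 0 < (T : ℝ) - T₀ := by linarith
  have hTT : T₀ ≤ T := by exact_mod_cast (by linarith : (T₀ : ℝ) ≤ T)
  have hsn : n / ((T : ℝ) - T₀) / n = 1 / ((T : ℝ) - T₀) := by field_simp
  refine mul_sum_le_of_increment_le (K := K) hTT (one_div_mul_cancel hm.ne') (fun t => ?_) hE ?_
  · simpa only [hsn] using hgain t _ (div_pos (by linarith) hm)
      ((div_le_one hm).2 (by linarith : (n : ℝ) ≤ T - T₀))
  · have h2K : 2 * K ≤ ((T : ℝ) - T₀) * ε := (div_le_iff₀ hε).1 (by linarith)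
    rw [one_div_mul_eq_div, div_le_iff₀ hm]
    linarith

end Recurrences

section SDCA

variable {n d : ℕ} {lam : ℝ} (x : Fin n → EuclideanSpace ℝ (Fin d)) {φ : Fin n → ℝ → ℝ}

lemma feas_zero (hφ0 : ∀ i a, 0 ≤ φ i a) : Feas φ (fun _ => 0) :=
  fun i => finiteConj_of_forall_le (c := 0) fun z => by simp [hφ0 i z]

lemma dualObj_zero_nonneg (hφ0 : ∀ i a, 0 ≤ φ i a) : 0 ≤ dualObj lam x φ (fun _ => 0) := by
  have hconj : ∀ i, fconj (φ i) (-0) ≤ 0 :=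
    fun i => fconj_le_of_forall fun z => by simp [hφ0 i z]
  have hw : wvec lam x (fun _ => 0) = 0 := by simp [wvec]
  rw [dualObj, hw, norm_zero]
  have := Finset.sum_nonneg fun i (_ : i ∈ univ) => neg_nonneg.2 (hconj i)
  simp only [zero_pow two_ne_zero, mul_zero, sub_zero]
  positivity

lemma primalObj_zero_le_one (hn : 0 < n) (hφ1 : ∀ i, φ i 0 ≤ 1) : primalObj lam x φ 0 ≤ 1 := by
  have hN : (0 : ℝ) < n := Nat.cast_pos.2 hn
  have hsum : ∑ i, φ i 0 ≤ n := by simpa using Finset.sum_le_sum fun i (_ : i ∈ univ) => hφ1 i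
  simp only [primalObj, inner_zero_right, norm_zero, zero_pow two_ne_zero, mul_zero, add_zero]
  rw [one_div_mul_eq_div, div_le_iff₀ hN]
  simpa using hsum

variable (φ) (step : (Fin n → ℝ) → Fin n → (Fin n → ℝ)) (hn : 0 < n)

lemma le_expIdx_dualObj_traj_succ_sub (hlam : 0 < lam) (hconv : ∀ i, ConvexOn ℝ Set.univ (φ i))
    {L : ℝ} (hL : ∀ i, ∀ a b : ℝ, |φ i a - φ i b| ≤ L * |a - b|) (hx : ∀ i, ‖x i‖ ≤ 1)
    (hstep_feas : ∀ α i, Feas φ α → Feas φ (step α i))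
    (hstep_max : ∀ α i c, Feas φ (Function.update α i c) →
      dualObj lam x φ (Function.update α i c) ≤ dualObj lam x φ (step α i))
    {α0 : Fin n → ℝ} (h0 : Feas φ α0) (t : ℕ) {s : ℝ} (hs0 : 0 ≤ s) (hs1 : s ≤ 1) :
    s / n * ExpIdx hn t (fun idx => dualityGap lam x φ (traj step α0 idx t))
        - (s / n) ^ 2 * (2 * L ^ 2 / lam)
      ≤ ExpIdx hn (t + 1) (fun idx => dualObj lam x φ (traj step α0 idx (t + 1)))
        - ExpIdx hn t (fun idx => dualObj lam x φ (traj step α0 idx t)) := by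
  have h := expIdx_mono hn (t := t) fun idx => le_avg_dualObj_step_sub x φ hn hlam hconv hL hx
    step hstep_max (feas_traj step α0 hstep_feas h0 idx t) hs0 hs1
  rwa [expIdx_sub, expIdx_sub, expIdx_const_mul, expIdx_const, ← expIdx_traj_succ] at h

lemma dualObj_sub_expIdx_succ_le (hlam : 0 < lam) (hconv : ∀ i, ConvexOn ℝ Set.univ (φ i))
    {L : ℝ} (hL : ∀ i, ∀ a b : ℝ, |φ i a - φ i b| ≤ L * |a - b|) (hx : ∀ i, ‖x i‖ ≤ 1)
    (hstep_feas : ∀ α i, Feas φ α → Feas φ (step α i))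
    (hstep_max : ∀ α i c, Feas φ (Function.update α i c) →
      dualObj lam x φ (Function.update α i c) ≤ dualObj lam x φ (step α i))
    {αstar : Fin n → ℝ} (hstar_feas : Feas φ αstar)
    {α0 : Fin n → ℝ} (h0 : Feas φ α0) (t : ℕ) {s : ℝ} (hs0 : 0 ≤ s) (hs1 : s ≤ 1) :
    dualObj lam x φ αstar
        - ExpIdx hn (t + 1) (fun idx => dualObj lam x φ (traj step α0 idx (t + 1)))
      ≤ (1 - s / n) * (dualObj lam x φ αstar
          - ExpIdx hn t (fun idx => dualObj lam x φ (traj step α0 idx t)))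
        + (s / n) ^ 2 * (2 * L ^ 2 / lam) := by
  have hgain := le_expIdx_dualObj_traj_succ_sub x φ step hn hlam hconv hL hx hstep_feas hstep_max
    h0 t hs0 hs1
  have hweak : dualObj lam x φ αstar - ExpIdx hn t (fun idx => dualObj lam x φ (traj step α0 idx t))
      ≤ ExpIdx hn t (fun idx => dualityGap lam x φ (traj step α0 idx t)) := by
    rw [← expIdx_const hn t (dualObj lam x φ αstar), ← expIdx_sub]
    exact expIdx_mono hn fun idx =>
      sub_le_sub_right (dualObj_le_primalObj x φ hlam hstar_feas _) _
  have := mul_le_mul_of_nonneg_left hweak (div_nonneg hs0 (Nat.cast_nonneg n))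
  linarith

lemma natCast_ceil_eq_max_zero_ceil (y : ℝ) : (⌈y⌉₊ : ℝ) = ((max 0 ⌈y⌉ : ℤ) : ℝ) := by
  rw [← Int.ceil_toNat, max_comm, ← Int.toNat_eq_max]
  norm_cast

lemma dualObj_sub_expIdx_le (hlam : 0 < lam) (hconv : ∀ i, ConvexOn ℝ Set.univ (φ i))
    {L : ℝ} (hL : ∀ i, ∀ a b : ℝ, |φ i a - φ i b| ≤ L * |a - b|) (hx : ∀ i, ‖x i‖ ≤ 1)
    (hφ0 : ∀ i a, 0 ≤ φ i a) (hφ1 : ∀ i, φ i 0 ≤ 1)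
    (hstep_feas : ∀ α i, Feas φ α → Feas φ (step α i))
    (hstep_max : ∀ α i c, Feas φ (Function.update α i c) →
      dualObj lam x φ (Function.update α i c) ≤ dualObj lam x φ (step α i))
    {αstar : Fin n → ℝ} (hstar_feas : Feas φ αstar) {ε : ℝ} (hε : 0 < ε) {T₀ : ℕ}
    (hT₀ : ((max 0 ⌈(n : ℝ) * Real.log (lam * n / (2 * L ^ 2))⌉ : ℤ) : ℝ)
        + 16 * L ^ 2 / (lam * ε) ≤ T₀) {t : ℕ} (ht : T₀ ≤ t) :
    dualObj lam x φ αstar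
        - ExpIdx hn t (fun idx => dualObj lam x φ (traj step (fun _ => 0) idx t)) ≤ ε / 2 := by
  have hfeas := feas_traj step _ hstep_feas (feas_zero hφ0)
  have hL0 : 0 ≤ L := by simpa using (abs_nonneg _).trans (hL ⟨0, hn⟩ 1 0)
  rcases hL0.eq_or_lt with rfl | hLpos
  · -- for `L = 0`, `0` is the only feasible dual point, so the trajectory never moves
    have hzero : ∀ β, Feas φ β → β = fun _ => 0 := fun β hβ =>
      funext fun i => by simpa using abs_le_of_finiteConj (hL i) (hβ i)
    have htraj : ∀ idx, traj step (fun _ => 0) idx t = fun _ => 0 :=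
      fun idx => hzero _ (hfeas idx t)
    simp only [htraj, hzero _ hstar_feas, expIdx_const, sub_self]
    positivity
  have hK : 0 < 2 * L ^ 2 / lam := by positivity
  refine le_half_of_sdca_recurrence hn hK hε (e := fun t => dualObj lam x φ αstar
      - ExpIdx hn t (fun idx => dualObj lam x φ (traj step (fun _ => 0) idx t)))
    (fun t s hs0 hs1 => dualObj_sub_expIdx_succ_le x φ step hn hlam hconv hL hx hstep_feas
      hstep_max hstar_feas (feas_zero hφ0) t hs0.le hs1) ?_
    (t₀ := ⌈(n : ℝ) * Real.log (lam * n / (2 * L ^ 2))⌉₊) ?_ ?_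
  · show _ - ExpIdx hn 0 (fun _ => dualObj lam x φ (fun _ => 0)) ≤ 1
    rw [expIdx_const]
    linarith [dualObj_le_primalObj x φ hlam hstar_feas 0,
      primalObj_zero_le_one (lam := lam) x hn hφ1, dualObj_zero_nonneg (lam := lam) x hφ0]
  · rw [show (n : ℝ) / (2 * L ^ 2 / lam) = lam * n / (2 * L ^ 2) by field_simp]
    exact Nat.le_ceil _
  · rw [natCast_ceil_eq_max_zero_ceil, show 8 * (2 * L ^ 2 / lam) / ε = 16 * L ^ 2 / (lam * ε) by
      field_simp; ring]
    exact hT₀.trans (Nat.cast_le.2 ht)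

end SDCA

theorem sdca_lipschitz_general
    (n d : ℕ) (hn : 0 < n)
    (x : Fin n → EuclideanSpace ℝ (Fin d))
    (φ : Fin n → ℝ → ℝ) (hconv : ∀ i, ConvexOn ℝ Set.univ (φ i))
    (lam : ℝ) (hlam : 0 < lam)
    (L : ℝ) (hL : ∀ i, ∀ a b : ℝ, |φ i a - φ i b| ≤ L * |a - b|)
    (hx : ∀ i, ‖x i‖ ≤ 1) (hφ0 : ∀ i a, 0 ≤ φ i a) (hφ1 : ∀ i, φ i 0 ≤ 1)
    (step : (Fin n → ℝ) → Fin n → (Fin n → ℝ))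
    (hstep_feas : ∀ α i, Feas φ α → Feas φ (step α i))
    (hstep_max : ∀ α i c, Feas φ (Function.update α i c) →
      dualObj lam x φ (Function.update α i c) ≤ dualObj lam x φ (step α i))
    (αstar : Fin n → ℝ) (hstar_feas : Feas φ αstar)
    (hstar_max : ∀ β, Feas φ β → dualObj lam x φ β ≤ dualObj lam x φ αstar)
    (εP : ℝ) (hεP : 0 < εP)
    (T₀ T : ℕ)
    (hT₀ : ((max 0 ⌈(n : ℝ) * Real.log (lam * n / (2 * L ^ 2))⌉ : ℤ) : ℝ)
        + 16 * L ^ 2 / (lam * εP) ≤ T₀)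
    (hT : (n : ℝ) + 4 * L ^ 2 / (lam * εP) ≤ (T : ℝ) - T₀) :
    (ExpIdx hn T (fun idx =>
        primalObj lam x φ (wvec lam x
          ((1 / ((T : ℝ) - T₀)) • ∑ t ∈ Finset.Ico T₀ T, traj step (fun _ => 0) idx t))
        - dualObj lam x φ
          ((1 / ((T : ℝ) - T₀)) • ∑ t ∈ Finset.Ico T₀ T, traj step (fun _ => 0) idx t)) ≤ εP)
    ∧ ∀ t : ℕ, T₀ ≤ t →
        ExpIdx hn t (fun idx =>
          dualObj lam x φ αstar - dualObj lam x φ (traj step (fun _ => 0) idx t)) ≤ εP / 2 := by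
  have hfeas := feas_traj step _ hstep_feas (feas_zero hφ0)
  have hsubopt := fun t (ht : T₀ ≤ t) => dualObj_sub_expIdx_le x φ step hn hlam hconv hL hx hφ0
    hφ1 hstep_feas hstep_max hstar_feas hεP hT₀ ht
  refine ⟨?_, fun t ht => by rw [expIdx_sub, expIdx_const]; exact hsubopt t ht⟩
  have hTT : T₀ < T := by
    have : (0 : ℝ) < n + 4 * L ^ 2 / (lam * εP) := by positivity
    exact_mod_cast (by linarith : (T₀ : ℝ) < T)
  have hET : ExpIdx hn T (fun idx => dualObj lam x φ (traj step (fun _ => 0) idx T))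
      ≤ dualObj lam x φ αstar := by
    simpa [expIdx_const] using expIdx_mono hn fun idx => hstar_max _ (hfeas idx T)
  have hT' : n + 2 * (2 * L ^ 2 / lam) / εP ≤ (T : ℝ) - T₀ := by
    rwa [show 2 * (2 * L ^ 2 / lam) / εP = 4 * L ^ 2 / (lam * εP) by field_simp; ring]
  calc _ ≤ ExpIdx hn T (fun idx => 1 / ((T : ℝ) - T₀)
          * ∑ t ∈ Finset.Ico T₀ T, dualityGap lam x φ (traj step (fun _ => 0) idx t)) :=
        expIdx_mono hn fun idx => dualityGap_smul_sum_le x hconv hlam.le hTT _ (hfeas idx)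
    _ = 1 / ((T : ℝ) - T₀) * ∑ t ∈ Finset.Ico T₀ T,
          ExpIdx hn t (fun idx => dualityGap lam x φ (traj step (fun _ => 0) idx t)) := by
        rw [expIdx_const_mul, expIdx_sum]
        congr 1
        exact Finset.sum_congr rfl fun t ht =>
          expIdx_traj_of_le step _ hn _ (Finset.mem_Ico.1 ht).2.le
    _ ≤ εP := one_div_mul_sum_le_of_gain hn (by positivity) hεP (E := fun t =>
          ExpIdx hn t (fun idx => dualObj lam x φ (traj step (fun _ => 0) idx t)))
        (fun t s hs0 hs1 => le_expIdx_dualObj_traj_succ_sub x φ step hn hlam hconv hL hx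
          hstep_feas hstep_max (feas_zero hφ0) t hs0.le hs1)
        (by linarith [hsubopt T₀ le_rfl]) hT'

/-- Theorem 1: SDCA convergence for `L`-Lipschitz losses, started at `α⁰ = 0`.
With `T₀ ≥ max(0, ⌈n log(λn/(2L²))⌉) + 16L²/(λ ε_P)` and
`T - T₀ ≥ n + 4L²/(λ ε_P)`, the expected duality gap of the averaged iterate is
at most `ε_P`, and the expected dual suboptimality at any time `t ≥ T₀` is at
most `ε_P / 2`. -/
theorem sdca_lipschitz
    (n d : ℕ) (hn : 0 < n)
    (x : Fin n → EuclideanSpace ℝ (Fin d))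
    (φ : Fin n → ℝ → ℝ) (hconv : ∀ i, ConvexOn ℝ Set.univ (φ i))
    (lam : ℝ) (hlam : 0 < lam)
    (L : ℝ) (hL : ∀ i, ∀ a b : ℝ, |φ i a - φ i b| ≤ L * |a - b|)
    (hx : ∀ i, ‖x i‖ ≤ 1) (hφ0 : ∀ i a, 0 ≤ φ i a) (hφ1 : ∀ i, φ i 0 ≤ 1)
    (step : (Fin n → ℝ) → Fin n → (Fin n → ℝ))
    (hstep_off : ∀ α i j, j ≠ i → step α i j = α j)
    (hstep_feas : ∀ α i, Feas φ α → Feas φ (step α i))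
    (hstep_max : ∀ α i c, Feas φ (Function.update α i c) →
      dualObj lam x φ (Function.update α i c) ≤ dualObj lam x φ (step α i))
    (αstar : Fin n → ℝ) (hstar_feas : Feas φ αstar)
    (hstar_max : ∀ β, Feas φ β → dualObj lam x φ β ≤ dualObj lam x φ αstar)
    (εP : ℝ) (hεP : 0 < εP)
    (T₀ T : ℕ)
    (hT₀ : ((max 0 ⌈(n : ℝ) * Real.log (lam * n / (2 * L ^ 2))⌉ : ℤ) : ℝ)
        + 16 * L ^ 2 / (lam * εP) ≤ T₀)
    (hT : (n : ℝ) + 4 * L ^ 2 / (lam * εP) ≤ (T : ℝ) - T₀) :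
    (ExpIdx hn T (fun idx =>
        primalObj lam x φ (wvec lam x
          ((1 / ((T : ℝ) - T₀)) • ∑ t ∈ Finset.Ico T₀ T, traj step (fun _ => 0) idx t))
        - dualObj lam x φ
          ((1 / ((T : ℝ) - T₀)) • ∑ t ∈ Finset.Ico T₀ T, traj step (fun _ => 0) idx t)) ≤ εP)
    ∧ ∀ t : ℕ, T₀ ≤ t →
        ExpIdx hn t (fun idx =>
          dualObj lam x φ αstar - dualObj lam x φ (traj step (fun _ => 0) idx t)) ≤ εP / 2 :=
  sdca_lipschitz_general n d hn x φ hconv lam hlam L hL hx hφ0 hφ1 step hstep_feas hstep_max αstar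
    hstar_feas hstar_max εP hεP T₀ T hT₀ hT
end

section
/- SDCA convergence for smooth losses, averaged output (Theorem 2, second part): Assume each φ_i is (1/γ)-smooth and convex (γ > 0), together with the standing assumptions, and run the SDCA process with α^(0) = 0. Let ε_P > 0 and let T > T_0 be integers with T_0 ≥ (n + 1/(λγ)) · log((n + 1/(λγ)) / ((T − T_0) ε_P)). Let ᾱ = (1/(T−T_0))∑_{t=T_0+1}^{T} α^(t−1) and w̄ = w(ᾱ) (or, alternatively, ᾱ = α^(t), w̄ = w^(t) for t drawn uniformly from {T_0+1,…,T}, with the expectation also over this t). Then E[P(w̄) − D(ᾱ)] ≤ ε_P. -/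
open scoped BigOperators RealInnerProductSpace
open Finset

/-!
Fix a coordinate `i` and let `a = x_iᵀ w(α)`. Smoothness of `φ_i` makes `φ_i*` `γ`-strongly
convex, so moving `-α_i` the fraction `s = n / C`, `C = n + 1/(λγ)`, of the way towards
`φ_i'(a)` raises `D` by at least `1/C` times the Fenchel–Young gap `φ_i(a) + φ_i*(-α_i) + α_i a`;
the maximizing step of SDCA does at least as well. These gaps average to the duality gap, so the
expected dual values `D_t` and gaps `G_t` satisfy `D_t + G_t / C ≤ D_{t+1}`. Weak duality gives
`G_t ≥ D_u - D_t` for every `u`, hence `D_u - D_t ≤ (1 - 1/C)^t`, and telescoping yields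
`∑_{T₀ ≤ t < T} G_t ≤ C (1 - 1/C)^{T₀} ≤ (T - T₀) ε_P`. Finally `P` is convex and `D` concave,
so the gap at the averaged dual point is at most the average gap.
-/

namespace SDCA

open Function

noncomputable def fenchelGap (φ : ℝ → ℝ) (a p : ℝ) : ℝ := φ a + fconj φ p - p * a

section Conjugate

variable {φ : ℝ → ℝ}

theorem mul_sub_le_fconj {u : ℝ} (hu : FiniteConj φ u) (z : ℝ) : z * u - φ z ≤ fconj φ u :=
  le_ciSup hu z

theorem convexOn_fconj : ConvexOn ℝ {u | FiniteConj φ u} (fconj φ) := by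
  have split : ∀ {a b : ℝ}, a + b = 1 → ∀ p q z : ℝ,
      z * (a * p + b * q) - φ z = a * (z * p - φ z) + b * (z * q - φ z) := by
    intro a b hab p q z
    linear_combination (φ z) * hab
  refine ⟨?_, ?_⟩
  · rintro p ⟨Bp, hBp⟩ q ⟨Bq, hBq⟩ a b ha hb hab
    refine ⟨a * Bp + b * Bq, ?_⟩
    rintro _ ⟨z, rfl⟩
    simp only [smul_eq_mul, split hab]
    gcongr
    exacts [hBp ⟨z, rfl⟩, hBq ⟨z, rfl⟩]
  · intro p hp q hq a b ha hb hab
    refine ciSup_le fun z => ?_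
    simp only [smul_eq_mul, split hab]
    gcongr
    exacts [mul_sub_le_fconj hp z, mul_sub_le_fconj hq z]

theorem _root_.IsSubgrad.finiteConj_s9 {a g : ℝ} (h : IsSubgrad φ a g) : FiniteConj φ g :=
  ⟨a * g - φ a, by rintro _ ⟨z, rfl⟩; linarith [h z]⟩

theorem _root_.IsSubgrad.fconj_eq_s9 {a g : ℝ} (h : IsSubgrad φ a g) : fconj φ g = a * g - φ a :=
  le_antisymm (ciSup_le fun z => by linarith [h z]) (mul_sub_le_fconj h.finiteConj_s9 a)

theorem _root_.ConvexOn.isSubgrad_deriv (hc : ConvexOn ℝ Set.univ φ) (hd : Differentiable ℝ φ)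
    (a : ℝ) : IsSubgrad φ a (deriv φ a) := by
  intro b
  rcases lt_trichotomy a b with hab | rfl | hba
  · have h := hc.deriv_le_slope (Set.mem_univ a) (Set.mem_univ b) hab (hd a)
    rw [slope_def_field, le_div_iff₀ (sub_pos.2 hab)] at h
    linarith
  · simp
  · have h := hc.slope_le_deriv (Set.mem_univ b) (Set.mem_univ a) hba (hd a)
    rw [slope_def_field, div_le_iff₀ (sub_pos.2 hba)] at h
    linarith

theorem le_add_deriv_mul_add_sq {L : ℝ} (hd : Differentiable ℝ φ)
    (hL : ∀ a b, |deriv φ a - deriv φ b| ≤ L * |a - b|) (a b : ℝ) :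
    φ b ≤ φ a + deriv φ a * (b - a) + L / 2 * (b - a) ^ 2 := by
  set g : ℝ → ℝ := fun t => L / 2 * t ^ 2 - φ t
  have hg : ∀ t, HasDerivAt g (L * t - deriv φ t) t := fun t =>
    (((hasDerivAt_pow 2 t).const_mul (L / 2)).fun_sub (hd t).hasDerivAt).congr_deriv
      (by norm_num; ring)
  have hmono : Monotone (deriv g) := fun s t hst => by
    rw [(hg s).deriv, (hg t).deriv]
    have := (le_abs_self _).trans (hL t s)
    rw [abs_of_nonneg (sub_nonneg.2 hst)] at this
    linarith
  -- `t ↦ L/2 t² - φ t` is convex, so it lies above its tangent at `a`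
  have := (hmono.convexOn_univ_of_deriv fun t => (hg t).differentiableAt).isSubgrad_deriv
    (fun t => (hg t).differentiableAt) a b
  rw [(hg a).deriv] at this
  simp only [g] at this
  linarith

theorem strongConvexOn_fconj {γ : ℝ} (hγ : 0 < γ) (hd : Differentiable ℝ φ)
    (hder : ∀ a b, |deriv φ a - deriv φ b| ≤ (1 / γ) * |a - b|) :
    StrongConvexOn {u | FiniteConj φ u} γ (fconj φ) := by
  refine ⟨convexOn_fconj.1, fun p hp q hq a b ha hb hab => ?_⟩
  obtain rfl : b = 1 - a := by linarith
  simp only [smul_eq_mul, Real.norm_eq_abs, sq_abs]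
  refine ciSup_le fun z => ?_
  -- test `φ*(p)` and `φ*(q)` at two points whose `a`-weighted mean is `z`
  have h₁ := le_add_deriv_mul_add_sq hd hder z (z + (1 - a) * γ * (p - q))
  have h₂ := le_add_deriv_mul_add_sq hd hder z (z - a * γ * (p - q))
  have e₁ : 1 / γ / 2 * (z + (1 - a) * γ * (p - q) - z) ^ 2
      = γ / 2 * (1 - a) ^ 2 * (p - q) ^ 2 := by
    field_simp
    ring
  have e₂ : 1 / γ / 2 * (z - a * γ * (p - q) - z) ^ 2 = γ / 2 * a ^ 2 * (p - q) ^ 2 := by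
    field_simp
    ring
  rw [e₁] at h₁
  rw [e₂] at h₂
  linear_combination a * mul_sub_le_fconj hp (z + (1 - a) * γ * (p - q))
    + (1 - a) * mul_sub_le_fconj hq (z - a * γ * (p - q)) + a * h₁ + (1 - a) * h₂

/-- In SDCA, `p = -α_i`, `a = x_iᵀ w(α)` and `κ = ‖x_i‖² / (λn)`. -/
theorem fconj_step_add_mul_fenchelGap_le {γ : ℝ} (hγ : 0 < γ) (hc : ConvexOn ℝ Set.univ φ)
    (hd : Differentiable ℝ φ) (hder : ∀ a b, |deriv φ a - deriv φ b| ≤ (1 / γ) * |a - b|)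
    {p : ℝ} (hp : FiniteConj φ p) (a : ℝ) {s κ : ℝ} (hs₀ : 0 ≤ s) (hs₁ : s ≤ 1)
    (hκ : s * κ ≤ γ * (1 - s)) :
    fconj φ ((1 - s) * p + s * deriv φ a) + s * fenchelGap φ a p
      ≤ fconj φ p + s * (deriv φ a - p) * a - κ / 2 * (s * (deriv φ a - p)) ^ 2 := by
  have hu := hc.isSubgrad_deriv hd a
  have hS := (strongConvexOn_fconj hγ hd hder).2 hp hu.finiteConj_s9 (sub_nonneg.2 hs₁) hs₀
    (sub_add_cancel 1 s)
  simp only [smul_eq_mul, Real.norm_eq_abs, sq_abs, hu.fconj_eq_s9] at hS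
  unfold fenchelGap
  linear_combination hS
    + 1 / 2 * mul_nonneg (mul_nonneg hs₀ (sq_nonneg (deriv φ a - p))) (sub_nonneg.2 hκ)

theorem finiteConj_zero_of_nonneg (hφ : ∀ a, 0 ≤ φ a) : FiniteConj φ 0 :=
  ⟨0, by rintro _ ⟨z, rfl⟩; simpa using hφ z⟩

theorem fconj_zero_nonpos_of_nonneg (hφ : ∀ a, 0 ≤ φ a) : fconj φ 0 ≤ 0 :=
  ciSup_le fun z => by simpa using hφ z

end Conjugate

theorem _root_.ConvexOn.sum {𝕜 E β ι : Type*} [Semiring 𝕜] [PartialOrder 𝕜] [AddCommMonoid E]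
    [AddCommMonoid β] [PartialOrder β] [IsOrderedAddMonoid β] [SMul 𝕜 E] [Module 𝕜 β]
    {s : Set E} (hs : Convex 𝕜 s) (t : Finset ι) {f : ι → E → β}
    (hf : ∀ i ∈ t, ConvexOn 𝕜 s (f i)) : ConvexOn 𝕜 s fun x => ∑ i ∈ t, f i x := by
  classical
  induction t using Finset.induction_on with
  | empty => simpa using convexOn_const (0 : β) hs
  | insert i t hi ih =>
    simp only [Finset.sum_insert hi]
    exact (hf i (mem_insert_self i t)).add (ih fun j hj => hf j (mem_insert_of_mem hj))

section Objectives

variable {n d : ℕ} (lam : ℝ) (x : Fin n → EuclideanSpace ℝ (Fin d)) (φ : Fin n → ℝ → ℝ)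

noncomputable def wvecLinear : (Fin n → ℝ) →ₗ[ℝ] EuclideanSpace ℝ (Fin d) :=
  (1 / (lam * n)) • Fintype.linearCombination ℝ x

noncomputable def dualityGap (α : Fin n → ℝ) : ℝ :=
  primalObj lam x φ (wvec lam x α) - dualObj lam x φ α

theorem wvecLinear_apply (α : Fin n → ℝ) : wvecLinear lam x α = wvec lam x α := by
  simp [wvecLinear, wvec, Fintype.linearCombination_apply]

theorem wvec_update (α : Fin n → ℝ) (i : Fin n) (c : ℝ) :
    wvec lam x (update α i c) = wvec lam x α + ((c - α i) / (lam * n)) • x i := by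
  have : update α i c = α + Pi.single i (c - α i) := by
    ext j
    rcases eq_or_ne j i with rfl | h <;> simp [*]
  rw [← wvecLinear_apply, this, map_add, wvecLinear_apply]
  simp [wvecLinear, Fintype.linearCombination_apply_single, smul_smul, div_eq_inv_mul]

theorem inner_wvec_left (α : Fin n → ℝ) (w : EuclideanSpace ℝ (Fin d)) :
    ⟪wvec lam x α, w⟫ = (1 / (lam * n)) * ∑ i, α i * ⟪x i, w⟫ := by
  simp [wvec, real_inner_smul_left, sum_inner]



theorem dualityGap_eq_sum_fenchelGap (hn : 0 < n) (hlam : 0 < lam) (α : Fin n → ℝ) :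
    dualityGap lam x φ α = (1 / n) * ∑ i, fenchelGap (φ i) ⟪x i, wvec lam x α⟫ (-(α i)) := by
  have hw : lam * ‖wvec lam x α‖ ^ 2 = (1 / n) * ∑ i, α i * ⟪x i, wvec lam x α⟫ := by
    rw [← real_inner_self_eq_norm_sq, inner_wvec_left]
    field_simp
  simp only [dualityGap, primalObj, dualObj, fenchelGap, sum_sub_distrib, sum_add_distrib,
    neg_mul, sum_neg_distrib]
  linear_combination hw

theorem dualObj_le_primalObj (hn : 0 < n) (hlam : 0 < lam) {α : Fin n → ℝ} (hα : Feas φ α)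
    (w : EuclideanSpace ℝ (Fin d)) : dualObj lam x φ α ≤ primalObj lam x φ w := by
  have hFY : ∑ i, -fconj (φ i) (-(α i)) ≤ ∑ i, (φ i ⟪x i, w⟫ + α i * ⟪x i, w⟫) :=
    sum_le_sum fun i _ => by linarith [mul_sub_le_fconj (hα i) ⟪x i, w⟫]
  have hw : (1 / n) * ∑ i, α i * ⟪x i, w⟫ = lam * ⟪wvec lam x α, w⟫ := by
    rw [inner_wvec_left]
    field_simp
  rw [sum_add_distrib] at hFY
  have hFY' := mul_le_mul_of_nonneg_left hFY (by positivity : (0 : ℝ) ≤ 1 / n)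
  have hsq := norm_sub_sq_real (wvec lam x α) w
  unfold dualObj primalObj
  nlinarith [mul_nonneg hlam.le (sq_nonneg ‖wvec lam x α - w‖)]

theorem dualObj_update (hn : 0 < n) (hlam : 0 < lam) (α : Fin n → ℝ) (i : Fin n) (c : ℝ) :
    dualObj lam x φ (update α i c)
      = dualObj lam x φ α + (1 / n) * (fconj (φ i) (-(α i)) - fconj (φ i) (-c)
          - (c - α i) * ⟪x i, wvec lam x α⟫ - (c - α i) ^ 2 * ‖x i‖ ^ 2 / (2 * lam * n)) := by
  have hsum : ∑ j, -fconj (φ j) (-(update α i c j))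
      = ∑ j, -fconj (φ j) (-(α j)) + (fconj (φ i) (-(α i)) - fconj (φ i) (-c)) := by
    rw [← sub_eq_iff_eq_add', ← sum_sub_distrib, Fintype.sum_eq_single i]
    · simp only [update_self]
      ring
    · intro j hj
      simp [hj]
  have hnorm : ‖wvec lam x α + ((c - α i) / (lam * n)) • x i‖ ^ 2
      = ‖wvec lam x α‖ ^ 2 + 2 * ((c - α i) / (lam * n)) * ⟪x i, wvec lam x α⟫
        + ((c - α i) / (lam * n)) ^ 2 * ‖x i‖ ^ 2 := by
    rw [norm_add_sq_real, real_inner_smul_right, real_inner_comm, norm_smul, Real.norm_eq_abs,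
      mul_pow, sq_abs]
    ring
  unfold dualObj
  rw [wvec_update, hsum, hnorm]
  field_simp
  ring

theorem convex_setOf_feas : Convex ℝ {α : Fin n → ℝ | Feas φ α} := by
  intro α hα β hβ a b ha hb hab i
  have h : FiniteConj (φ i) (a * -(α i) + b * -(β i)) :=
    convexOn_fconj.1 (hα i) (hβ i) ha hb hab
  convert h using 2
  simp only [Pi.add_apply, Pi.smul_apply, smul_eq_mul]
  ring

theorem convexOn_primalObj (hconv : ∀ i, ConvexOn ℝ Set.univ (φ i)) (hlam : 0 ≤ lam) :
    ConvexOn ℝ Set.univ (primalObj lam x φ) := by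
  have hloss : ConvexOn ℝ Set.univ fun w => ∑ i, φ i ⟪x i, w⟫ :=
    ConvexOn.sum convex_univ _ fun i _ => (hconv i).comp_linearMap (innerₛₗ ℝ (x i))
  have hnorm := (convexOn_norm (convex_univ (𝕜 := ℝ) (E := EuclideanSpace ℝ (Fin d)))).pow
    (fun w _ => norm_nonneg w) 2
  exact (hloss.smul (by positivity : (0 : ℝ) ≤ 1 / n)).add
    (hnorm.smul (by positivity : 0 ≤ lam / 2))

theorem concaveOn_dualObj (hlam : 0 ≤ lam) :
    ConcaveOn ℝ {α | Feas φ α} (dualObj lam x φ) := by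
  have hconj : ConvexOn ℝ {α | Feas φ α} fun α => ∑ i, fconj (φ i) (-(α i)) :=
    ConvexOn.sum (convex_setOf_feas φ) _ fun i _ =>
      (convexOn_fconj.comp_linearMap (-LinearMap.proj i : (Fin n → ℝ) →ₗ[ℝ] ℝ)).subset
        (fun α (hα : Feas φ α) => hα i) (convex_setOf_feas φ)
  have hnorm : ConvexOn ℝ {α | Feas φ α} fun α => ‖wvec lam x α‖ ^ 2 := by
    have := (((convexOn_norm convex_univ).pow (fun w _ => norm_nonneg w) 2).comp_linearMap
      (wvecLinear lam x)).subset (Set.subset_univ _) (convex_setOf_feas φ)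
    simpa [comp_def, wvecLinear_apply] using this
  rw [← neg_convexOn_iff]
  refine ((hconj.smul (by positivity : (0 : ℝ) ≤ 1 / n)).add
    (hnorm.smul (by positivity : 0 ≤ lam / 2))).congr fun α _ => ?_
  simp only [dualObj, Pi.neg_apply, Pi.add_apply, smul_eq_mul, sum_neg_distrib]
  ring

theorem dualityGap_sum_le (hconv : ∀ i, ConvexOn ℝ Set.univ (φ i)) (hlam : 0 ≤ lam)
    {ι : Type*} {s : Finset ι} {c : ι → ℝ} (hc₀ : ∀ t ∈ s, 0 ≤ c t) (hc₁ : ∑ t ∈ s, c t = 1)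
    {β : ι → Fin n → ℝ} (hβ : ∀ t ∈ s, Feas φ (β t)) :
    dualityGap lam x φ (∑ t ∈ s, c t • β t) ≤ ∑ t ∈ s, c t * dualityGap lam x φ (β t) := by
  have hP := ((convexOn_primalObj lam x φ hconv hlam).comp_linearMap
    (wvecLinear lam x)).map_sum_le (p := β) hc₀ hc₁ fun t _ => Set.mem_univ _
  have hD := (concaveOn_dualObj lam x φ hlam).le_map_sum hc₀ hc₁ hβ
  simp only [comp_apply, wvecLinear_apply, smul_eq_mul] at hP hD
  simp only [dualityGap, mul_sub, sum_sub_distrib]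
  linarith

theorem dualObj_sub_dualObj_zero_le_one (hn : 0 < n) (hlam : 0 < lam)
    (hφ₀ : ∀ i a, 0 ≤ φ i a) (hφ₁ : ∀ i, φ i 0 ≤ 1) {α : Fin n → ℝ} (hα : Feas φ α) :
    dualObj lam x φ α - dualObj lam x φ 0 ≤ 1 := by
  have hP : primalObj lam x φ 0 ≤ 1 := by
    have : ∑ i, φ i ⟪x i, 0⟫ ≤ n := by
      simpa using sum_le_sum fun i (_ : i ∈ Finset.univ) => hφ₁ i
    simp only [primalObj, norm_zero, one_div_mul_eq_div]
    rw [zero_pow two_ne_zero, mul_zero, add_zero, div_le_one (by positivity)]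
    exact this
  have hD : 0 ≤ dualObj lam x φ 0 := by
    have : wvec lam x 0 = 0 := by simp [wvec]
    simp only [dualObj, this, norm_zero, Pi.zero_apply, neg_zero]
    have : 0 ≤ ∑ i, -fconj (φ i) 0 :=
      sum_nonneg fun i _ => neg_nonneg.2 (fconj_zero_nonpos_of_nonneg (hφ₀ i))
    rw [zero_pow two_ne_zero, mul_zero, sub_zero]
    positivity
  linarith [dualObj_le_primalObj lam x φ hn hlam hα 0]

end Objectives

section Ascent

variable {n d : ℕ} {lam γ : ℝ} {x : Fin n → EuclideanSpace ℝ (Fin d)} {φ : Fin n → ℝ → ℝ}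

theorem exists_update_dualObj_ge (hn : 0 < n) (hlam : 0 < lam) (hγ : 0 < γ) {i : Fin n}
    (hconv : ConvexOn ℝ Set.univ (φ i)) (hdiff : Differentiable ℝ (φ i))
    (hder : ∀ a b, |deriv (φ i) a - deriv (φ i) b| ≤ (1 / γ) * |a - b|) (hx : ‖x i‖ ≤ 1)
    {α : Fin n → ℝ} (hα : Feas φ α) :
    ∃ c, Feas φ (update α i c) ∧
      dualObj lam x φ α + fenchelGap (φ i) ⟪x i, wvec lam x α⟫ (-(α i)) / (n + 1 / (lam * γ))
        ≤ dualObj lam x φ (update α i c) := by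
  set C : ℝ := n + 1 / (lam * γ) with hC
  set a := ⟪x i, wvec lam x α⟫
  have hC₀ : 0 < C := by positivity
  -- the step size `s = n / C` is the one of the paper, `λγn / (1 + λγn)`
  set s : ℝ := n / C with hs
  have hs₀ : 0 ≤ s := by positivity
  have hs₁ : s ≤ 1 := (div_le_one hC₀).2 (le_add_of_nonneg_right (by positivity))
  have hκ : s * (‖x i‖ ^ 2 / (lam * n)) ≤ γ * (1 - s) := by
    have h₁ : s * (‖x i‖ ^ 2 / (lam * n)) = ‖x i‖ ^ 2 / (lam * C) := by
      rw [hs]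
      field_simp
    have h₂ : γ * (1 - s) = 1 / (lam * C) := by
      rw [hs, hC]
      field_simp
      ring
    rw [h₁, h₂]
    gcongr
    exact pow_le_one₀ (norm_nonneg _) hx
  have hstep := fconj_step_add_mul_fenchelGap_le hγ hconv hdiff hder (hα i) a hs₀ hs₁ hκ
  have hq : FiniteConj (φ i) ((1 - s) * -(α i) + s * deriv (φ i) a) :=
    convexOn_fconj.1 (hα i) (hconv.isSubgrad_deriv hdiff a).finiteConj_s9 (sub_nonneg.2 hs₁) hs₀
      (sub_add_cancel 1 s)
  refine ⟨-((1 - s) * -(α i) + s * deriv (φ i) a), fun j => ?_, ?_⟩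
  · rcases eq_or_ne j i with rfl | hj
    · simpa using hq
    · simpa [hj] using hα j
  · have hgap : fenchelGap (φ i) a (-(α i)) / C
        = 1 / n * (s * fenchelGap (φ i) a (-(α i))) := by
      rw [hs]
      field_simp
    rw [dualObj_update lam x φ hn hlam, neg_neg, hgap]
    linear_combination 1 / (n : ℝ) * hstep

theorem dualObj_add_dualityGap_div_le_average_step (hn : 0 < n) (hlam : 0 < lam) (hγ : 0 < γ)
    (hconv : ∀ i, ConvexOn ℝ Set.univ (φ i)) (hdiff : ∀ i, Differentiable ℝ (φ i))
    (hder : ∀ i, ∀ a b, |deriv (φ i) a - deriv (φ i) b| ≤ (1 / γ) * |a - b|)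
    (hx : ∀ i, ‖x i‖ ≤ 1) {step : (Fin n → ℝ) → Fin n → (Fin n → ℝ)}
    (hstep_max : ∀ α i c, Feas φ (update α i c) →
      dualObj lam x φ (update α i c) ≤ dualObj lam x φ (step α i))
    {α : Fin n → ℝ} (hα : Feas φ α) :
    dualObj lam x φ α + dualityGap lam x φ α / (n + 1 / (lam * γ))
      ≤ (∑ i, dualObj lam x φ (step α i)) / n := by
  have h : ∀ i, dualObj lam x φ α
      + fenchelGap (φ i) ⟪x i, wvec lam x α⟫ (-(α i)) / (n + 1 / (lam * γ))
        ≤ dualObj lam x φ (step α i) := fun i => by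
    obtain ⟨c, hc, hle⟩ :=
      exists_update_dualObj_ge hn hlam hγ (hconv i) (hdiff i) (hder i) (hx i) hα
    exact hle.trans (hstep_max α i c hc)
  have hsum := sum_le_sum fun i (_ : i ∈ Finset.univ) => h i
  rw [sum_add_distrib, sum_const, card_univ, Fintype.card_fin, nsmul_eq_mul, ← sum_div] at hsum
  rw [dualityGap_eq_sum_fenchelGap lam x φ hn hlam, le_div_iff₀ (by positivity)]
  field_simp
  field_simp at hsum
  linarith

end Ascent

section Expectation

variable {n : ℕ} (hn : 0 < n)

def padIdx (t : ℕ) (idx : Fin t → Fin n) : ℕ → Fin n :=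
  fun k => if h : k < t then idx ⟨k, h⟩ else ⟨0, hn⟩

theorem expIdx_eq (t : ℕ) (g : (ℕ → Fin n) → ℝ) :
    ExpIdx hn t g = (∑ idx : Fin t → Fin n, g (padIdx hn t idx)) / (n : ℝ) ^ t := rfl

theorem padIdx_snoc (t : ℕ) (idx : Fin t → Fin n) (a : Fin n) :
    padIdx hn (t + 1) (Fin.snoc idx a) = update (padIdx hn t idx) t a := by
  funext k
  rcases lt_trichotomy k t with h | rfl | h
  · rw [update_of_ne h.ne]
    unfold padIdx
    rw [dif_pos (by omega), dif_pos h]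
    exact Fin.snoc_castSucc (α := fun _ => Fin n) a idx ⟨k, h⟩
  · rw [update_self]
    unfold padIdx
    rw [dif_pos (by omega)]
    exact Fin.snoc_last (α := fun _ => Fin n) a idx
  · rw [update_of_ne h.ne']
    unfold padIdx
    rw [dif_neg (by omega), dif_neg (by omega)]

theorem expIdx_succ (t : ℕ) (g : (ℕ → Fin n) → ℝ) :
    ExpIdx hn (t + 1) g = ExpIdx hn t fun idx => (∑ a, g (update idx t a)) / n := by
  rw [expIdx_eq, expIdx_eq, ← (Fin.snocEquiv fun _ => Fin n).sum_comp, Fintype.sum_prod_type,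
    sum_comm, pow_succ, ← sum_div, div_div, mul_comm]
  simp [Fin.snocEquiv, padIdx_snoc]

theorem expIdx_mono {t : ℕ} {g g' : (ℕ → Fin n) → ℝ} (h : ∀ idx, g idx ≤ g' idx) :
    ExpIdx hn t g ≤ ExpIdx hn t g' :=
  div_le_div_of_nonneg_right (sum_le_sum fun _ _ => h _) (by positivity)

theorem expIdx_const (t : ℕ) (c : ℝ) : ExpIdx hn t (fun _ => c) = c := by
  have : (n : ℝ) ^ t ≠ 0 := pow_ne_zero _ (Nat.cast_ne_zero.2 hn.ne')
  simp [ExpIdx, field]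

theorem expIdx_add (t : ℕ) (g g' : (ℕ → Fin n) → ℝ) :
    ExpIdx hn t (fun idx => g idx + g' idx) = ExpIdx hn t g + ExpIdx hn t g' := by
  simp only [ExpIdx, sum_add_distrib, add_div]

theorem expIdx_sub (t : ℕ) (g g' : (ℕ → Fin n) → ℝ) :
    ExpIdx hn t (fun idx => g idx - g' idx) = ExpIdx hn t g - ExpIdx hn t g' := by
  simp only [ExpIdx, sum_sub_distrib, sub_div]

theorem expIdx_mul_left (t : ℕ) (c : ℝ) (g : (ℕ → Fin n) → ℝ) :
    ExpIdx hn t (fun idx => c * g idx) = c * ExpIdx hn t g := by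
  simp only [ExpIdx, ← mul_sum, mul_div_assoc]

theorem expIdx_div_const (t : ℕ) (c : ℝ) (g : (ℕ → Fin n) → ℝ) :
    ExpIdx hn t (fun idx => g idx / c) = ExpIdx hn t g / c := by
  simp only [ExpIdx, ← sum_div, div_right_comm]

theorem expIdx_sum (t : ℕ) {ι : Type*} (s : Finset ι) (g : ι → (ℕ → Fin n) → ℝ) :
    ExpIdx hn t (fun idx => ∑ u ∈ s, g u idx) = ∑ u ∈ s, ExpIdx hn t (g u) := by
  simp only [ExpIdx, sum_comm (s := s), sum_div]

theorem expIdx_of_dependsOn {t t' : ℕ} {g : (ℕ → Fin n) → ℝ} (hg : DependsOn g (Set.Iio t))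
    (htt' : t ≤ t') : ExpIdx hn t' g = ExpIdx hn t g := by
  induction t', htt' using Nat.le_induction with
  | base => rfl
  | succ t' htt' ih =>
    have hupd : ∀ idx a, g (update idx t' a) = g idx := fun idx a =>
      hg fun k hk => update_of_ne (by simp at hk; omega) _ _
    have hn' : (n : ℝ) ≠ 0 := Nat.cast_ne_zero.2 hn.ne'
    simp only [expIdx_succ, hupd, sum_const, card_univ, Fintype.card_fin, nsmul_eq_mul,
      mul_div_cancel_left₀ _ hn', ih]

end Expectation

section Trajectory

variable {n : ℕ} {step : (Fin n → ℝ) → Fin n → (Fin n → ℝ)} {α₀ : Fin n → ℝ}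

theorem traj_dependsOn (t : ℕ) : DependsOn (fun idx => traj step α₀ idx t) (Set.Iio t) := by
  induction t with
  | zero => exact fun _ _ _ => rfl
  | succ t ih =>
    intro idx idx' h
    exact congrArg₂ step (ih fun k hk => h k (Nat.lt_succ_of_lt hk)) (h t t.lt_succ_self)

theorem traj_update_succ (idx : ℕ → Fin n) (t : ℕ) (a : Fin n) :
    traj step α₀ (update idx t a) (t + 1) = step (traj step α₀ idx t) a := by
  rw [traj, update_self]
  exact congrArg (step · a) (traj_dependsOn t fun k hk => update_of_ne (ne_of_lt hk) _ _)

theorem feas_traj {φ : Fin n → ℝ → ℝ} (hstep : ∀ α i, Feas φ α → Feas φ (step α i))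
    (h₀ : Feas φ α₀) (idx : ℕ → Fin n) (t : ℕ) : Feas φ (traj step α₀ idx t) := by
  induction t with
  | zero => exact h₀
  | succ t ih => exact hstep _ _ ih

end Trajectory

section Recurrence

variable {D G : ℕ → ℝ} {C R : ℝ}

theorem sub_le_pow_mul_of_ascent (hC : 1 ≤ C) (hrec : ∀ t, D t + G t / C ≤ D (t + 1))
    (hgap : ∀ t u, D u - D t ≤ G t) (hR : ∀ u, D u - D 0 ≤ R) (u t : ℕ) :
    D u - D t ≤ (1 - 1 / C) ^ t * R := by
  induction t with
  | zero => simpa using hR u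
  | succ t ih =>
    have hC₀ : 0 < C := by linarith
    have hcontr : D u - D (t + 1) ≤ (1 - 1 / C) * (D u - D t) := by
      have := div_le_div_of_nonneg_right (hgap t u) hC₀.le
      have := hrec t
      linarith [show (1 - 1 / C) * (D u - D t) = D u - D t - (D u - D t) / C by ring]
    calc D u - D (t + 1) ≤ (1 - 1 / C) * ((1 - 1 / C) ^ t * R) :=
          hcontr.trans (mul_le_mul_of_nonneg_left ih (sub_nonneg.2 ((div_le_one hC₀).2 hC)))
      _ = (1 - 1 / C) ^ (t + 1) * R := by ring

theorem sum_Ico_le_of_ascent (hC : 1 ≤ C) (hrec : ∀ t, D t + G t / C ≤ D (t + 1))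
    (hgap : ∀ t u, D u - D t ≤ G t) (hR : ∀ u, D u - D 0 ≤ R) {T₀ T : ℕ} (hT : T₀ ≤ T) :
    ∑ t ∈ Ico T₀ T, G t ≤ C * ((1 - 1 / C) ^ T₀ * R) := by
  have hC₀ : 0 < C := by linarith
  calc ∑ t ∈ Ico T₀ T, G t ≤ ∑ t ∈ Ico T₀ T, C * (D (t + 1) - D t) :=
        sum_le_sum fun t _ => (div_le_iff₀' hC₀).1 (by linarith [hrec t])
    _ = C * (D T - D T₀) := by rw [← mul_sum, sum_Ico_sub D hT]
    _ ≤ C * ((1 - 1 / C) ^ T₀ * R) :=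
        mul_le_mul_of_nonneg_left (sub_le_pow_mul_of_ascent hC hrec hgap hR T T₀) hC₀.le

end Recurrence

theorem mul_one_sub_one_div_pow_le {C y : ℝ} {k : ℕ} (hC : 1 ≤ C) (hy : 0 < y)
    (hk : C * Real.log (C / y) ≤ k) : C * (1 - 1 / C) ^ k ≤ y := by
  have hC₀ : 0 < C := by linarith
  have hpow : (1 - 1 / C) ^ k ≤ y / C := calc
    (1 - 1 / C) ^ k ≤ Real.exp (-(1 / C)) ^ k :=
        pow_le_pow_left₀ (sub_nonneg.2 ((div_le_one hC₀).2 hC)) (Real.one_sub_le_exp_neg _) k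
    _ = Real.exp (-(k / C)) := by rw [← Real.exp_nat_mul]; ring_nf
    _ ≤ Real.exp (-Real.log (C / y)) :=
        Real.exp_le_exp.2 (neg_le_neg ((le_div_iff₀ hC₀).2 (by linarith)))
    _ = y / C := by rw [Real.exp_neg, Real.exp_log (by positivity), inv_div]
  calc C * (1 - 1 / C) ^ k ≤ C * (y / C) := mul_le_mul_of_nonneg_left hpow hC₀.le
    _ = y := mul_div_cancel₀ y hC₀.ne'

section ExpectedDual

variable {n d : ℕ} (hn : 0 < n) {lam γ : ℝ} {x : Fin n → EuclideanSpace ℝ (Fin d)}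
  {φ : Fin n → ℝ → ℝ} {step : (Fin n → ℝ) → Fin n → (Fin n → ℝ)} {α₀ : Fin n → ℝ}

theorem expIdx_dualObj_traj_add_le_succ (hlam : 0 < lam) (hγ : 0 < γ)
    (hconv : ∀ i, ConvexOn ℝ Set.univ (φ i)) (hdiff : ∀ i, Differentiable ℝ (φ i))
    (hder : ∀ i, ∀ a b, |deriv (φ i) a - deriv (φ i) b| ≤ (1 / γ) * |a - b|)
    (hx : ∀ i, ‖x i‖ ≤ 1)
    (hstep_max : ∀ α i c, Feas φ (update α i c) →
      dualObj lam x φ (update α i c) ≤ dualObj lam x φ (step α i))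
    (hfeas : ∀ idx t, Feas φ (traj step α₀ idx t)) (t : ℕ) :
    ExpIdx hn t (fun idx => dualObj lam x φ (traj step α₀ idx t))
      + ExpIdx hn t (fun idx => dualityGap lam x φ (traj step α₀ idx t)) / (n + 1 / (lam * γ))
      ≤ ExpIdx hn (t + 1) (fun idx => dualObj lam x φ (traj step α₀ idx (t + 1))) := by
  rw [expIdx_succ]
  simp only [traj_update_succ]
  rw [← expIdx_div_const, ← expIdx_add]
  exact expIdx_mono hn fun idx => dualObj_add_dualityGap_div_le_average_step hn hlam hγ hconv
    hdiff hder hx hstep_max (hfeas idx t)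

theorem expIdx_dualObj_traj_sub_le (hlam : 0 < lam)
    (hfeas : ∀ idx t, Feas φ (traj step α₀ idx t)) (t u : ℕ) :
    ExpIdx hn u (fun idx => dualObj lam x φ (traj step α₀ idx u))
      - ExpIdx hn t (fun idx => dualObj lam x φ (traj step α₀ idx t))
      ≤ ExpIdx hn t (fun idx => dualityGap lam x φ (traj step α₀ idx t)) := by
  have hweak : ExpIdx hn u (fun idx => dualObj lam x φ (traj step α₀ idx u))
      ≤ ExpIdx hn t (fun idx => primalObj lam x φ (wvec lam x (traj step α₀ idx t))) := by
    rw [← expIdx_const hn t (ExpIdx hn u _)]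
    refine expIdx_mono hn fun idx => ?_
    rw [← expIdx_const hn u (primalObj lam x φ _)]
    exact expIdx_mono hn fun idx' => dualObj_le_primalObj lam x φ hn hlam (hfeas idx' u) _
  simp only [dualityGap]
  rw [expIdx_sub]
  linarith

theorem expIdx_dualObj_traj_sub_le_one (hlam : 0 < lam) (hφ₀ : ∀ i a, 0 ≤ φ i a)
    (hφ₁ : ∀ i, φ i 0 ≤ 1) (hfeas : ∀ idx t, Feas φ (traj step (fun _ => 0) idx t)) (u : ℕ) :
    ExpIdx hn u (fun idx => dualObj lam x φ (traj step (fun _ => 0) idx u))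
      - ExpIdx hn 0 (fun idx => dualObj lam x φ (traj step (fun _ => 0) idx 0)) ≤ 1 := by
  have h₀ : ExpIdx hn 0 (fun idx => dualObj lam x φ (traj step (fun _ => 0) idx 0))
      = dualObj lam x φ 0 := expIdx_const hn 0 _
  rw [h₀, ← expIdx_const hn u (dualObj lam x φ 0), ← expIdx_sub, ← expIdx_const hn u 1]
  exact expIdx_mono hn fun idx =>
    dualObj_sub_dualObj_zero_le_one lam x φ hn hlam hφ₀ hφ₁ (hfeas idx u)

theorem expIdx_dualityGap_average_le (hconv : ∀ i, ConvexOn ℝ Set.univ (φ i)) (hlam : 0 ≤ lam)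
    (hfeas : ∀ idx t, Feas φ (traj step α₀ idx t)) {T₀ T : ℕ} (hT : T₀ < T) :
    ExpIdx hn T (fun idx =>
        dualityGap lam x φ ((1 / ((T : ℝ) - T₀)) • ∑ t ∈ Ico T₀ T, traj step α₀ idx t))
      ≤ 1 / ((T : ℝ) - T₀) * ∑ t ∈ Ico T₀ T,
          ExpIdx hn t (fun idx => dualityGap lam x φ (traj step α₀ idx t)) := by
  have hcard : ((Ico T₀ T).card : ℝ) = T - T₀ := by
    rw [Nat.card_Ico, Nat.cast_sub hT.le]
  have hm : (0 : ℝ) < T - T₀ := sub_pos.2 (Nat.cast_lt.2 hT)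
  calc _ ≤ ExpIdx hn T (fun idx =>
        1 / ((T : ℝ) - T₀) * ∑ t ∈ Ico T₀ T, dualityGap lam x φ (traj step α₀ idx t)) := by
        refine expIdx_mono hn fun idx => ?_
        rw [smul_sum, mul_sum]
        exact dualityGap_sum_le lam x φ hconv hlam (fun _ _ => by positivity)
          (by rw [sum_const, nsmul_eq_mul, hcard]; field_simp) fun t _ => hfeas idx t
    _ = _ := by
        rw [expIdx_mul_left, expIdx_sum]
        congr 1
        refine sum_congr rfl fun t ht => expIdx_of_dependsOn hn (fun idx idx' h => ?_)
          (mem_Ico.1 ht).2.le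
        simp only [traj_dependsOn t h]

end ExpectedDual

end SDCA

open SDCA in
theorem sdca_smooth_averaged_general
    (n d : ℕ) (hn : 0 < n)
    (x : Fin n → EuclideanSpace ℝ (Fin d))
    (φ : Fin n → ℝ → ℝ) (hconv : ∀ i, ConvexOn ℝ Set.univ (φ i))
    (lam : ℝ) (hlam : 0 < lam)
    (γ : ℝ) (hγ : 0 < γ)
    (hdiff : ∀ i, Differentiable ℝ (φ i))
    (hder : ∀ i, ∀ a b : ℝ, |deriv (φ i) a - deriv (φ i) b| ≤ (1 / γ) * |a - b|)
    (hx : ∀ i, ‖x i‖ ≤ 1) (hφ0 : ∀ i a, 0 ≤ φ i a) (hφ1 : ∀ i, φ i 0 ≤ 1)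
    (step : (Fin n → ℝ) → Fin n → (Fin n → ℝ))
    (hstep_feas : ∀ α i, Feas φ α → Feas φ (step α i))
    (hstep_max : ∀ α i c, Feas φ (Function.update α i c) →
      dualObj lam x φ (Function.update α i c) ≤ dualObj lam x φ (step α i))
    (εP : ℝ) (hεP : 0 < εP)
    (T₀ T : ℕ) (hTT : T₀ < T)
    (hT₀ : ((n : ℝ) + 1 / (lam * γ)) *
        Real.log (((n : ℝ) + 1 / (lam * γ)) / (((T : ℝ) - T₀) * εP)) ≤ T₀) :
    ExpIdx hn T (fun idx =>
        primalObj lam x φ (wvec lam x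
          ((1 / ((T : ℝ) - T₀)) • ∑ t ∈ Finset.Ico T₀ T, traj step (fun _ => 0) idx t))
        - dualObj lam x φ
          ((1 / ((T : ℝ) - T₀)) • ∑ t ∈ Finset.Ico T₀ T, traj step (fun _ => 0) idx t)) ≤ εP := by
  have hC : 1 ≤ (n : ℝ) + 1 / (lam * γ) :=
    le_add_of_le_of_nonneg (Nat.one_le_cast.2 hn) (by positivity)
  have hm : (0 : ℝ) < T - T₀ := sub_pos.2 (Nat.cast_lt.2 hTT)
  have hfeas := feas_traj (α₀ := fun _ => 0) hstep_feas
    (fun i => by simpa using finiteConj_zero_of_nonneg (hφ0 i))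
  have hsum := sum_Ico_le_of_ascent hC
    (expIdx_dualObj_traj_add_le_succ hn hlam hγ hconv hdiff hder hx hstep_max hfeas)
    (expIdx_dualObj_traj_sub_le hn hlam hfeas)
    (expIdx_dualObj_traj_sub_le_one hn hlam hφ0 hφ1 hfeas) hTT.le
  have hrate := mul_one_sub_one_div_pow_le hC (by positivity) hT₀
  calc _ ≤ _ := expIdx_dualityGap_average_le hn hconv hlam.le hfeas hTT
    _ ≤ 1 / ((T : ℝ) - T₀) * (((T : ℝ) - T₀) * εP) := by
        gcongr
        linarith
    _ = εP := by field_simp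

/-- Theorem 2 (second part): SDCA convergence for `(1/γ)`-smooth convex losses,
averaged output. If `T > T₀ ≥ (n + 1/(λγ)) log((n + 1/(λγ))/((T-T₀) ε_P))`, then
the expected duality gap of the averaged iterate is at most `ε_P`. -/
theorem sdca_smooth_averaged
    (n d : ℕ) (hn : 0 < n)
    (x : Fin n → EuclideanSpace ℝ (Fin d))
    (φ : Fin n → ℝ → ℝ) (hconv : ∀ i, ConvexOn ℝ Set.univ (φ i))
    (lam : ℝ) (hlam : 0 < lam)
    (γ : ℝ) (hγ : 0 < γ)
    (hdiff : ∀ i, Differentiable ℝ (φ i))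
    (hder : ∀ i, ∀ a b : ℝ, |deriv (φ i) a - deriv (φ i) b| ≤ (1 / γ) * |a - b|)
    (hx : ∀ i, ‖x i‖ ≤ 1) (hφ0 : ∀ i a, 0 ≤ φ i a) (hφ1 : ∀ i, φ i 0 ≤ 1)
    (step : (Fin n → ℝ) → Fin n → (Fin n → ℝ))
    (hstep_off : ∀ α i j, j ≠ i → step α i j = α j)
    (hstep_feas : ∀ α i, Feas φ α → Feas φ (step α i))
    (hstep_max : ∀ α i c, Feas φ (Function.update α i c) →
      dualObj lam x φ (Function.update α i c) ≤ dualObj lam x φ (step α i))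
    (εP : ℝ) (hεP : 0 < εP)
    (T₀ T : ℕ) (hTT : T₀ < T)
    (hT₀ : ((n : ℝ) + 1 / (lam * γ)) *
        Real.log (((n : ℝ) + 1 / (lam * γ)) / (((T : ℝ) - T₀) * εP)) ≤ T₀) :
    ExpIdx hn T (fun idx =>
        primalObj lam x φ (wvec lam x
          ((1 / ((T : ℝ) - T₀)) • ∑ t ∈ Finset.Ico T₀ T, traj step (fun _ => 0) idx t))
        - dualObj lam x φ
          ((1 / ((T : ℝ) - T₀)) • ∑ t ∈ Finset.Ico T₀ T, traj step (fun _ => 0) idx t)) ≤ εP :=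
  sdca_smooth_averaged_general n d hn x φ hconv lam hlam γ hγ hdiff hder hx hφ0 hφ1 step hstep_feas
    hstep_max εP hεP T₀ T hTT hT₀
end
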